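/- arXiv:2105.03328 — 6 statements merged into one kernel-verified Lean document; each statement's English description precedes it below -/
import Mathlib

section
/- Let q be a prime power, F_{q^m} an extension of F_q, and a_1,...,a_n elements of F_{q^m}. The k×n matrix M with entries M_{i,j} = a_j^{q^{i-1}} (the Moore matrix) has the property that every k×k submatrix of M is invertible if and only if the elements a_1,...,a_n are k-wise linearly independent over F_q (every subset of size at most k is F_q-linearly independent). -/
/-!
If `∑ λᵢ aⱼ^{qⁱ} = 0` for all columns `j` of a square Moore matrix, then the `aⱼ` are roots of the
linearized polynomial `P = ∑ λᵢ X^{qⁱ}`. Since `x ↦ x^q` is `F`-linear, so is `x ↦ P(x)`; hence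
`P` vanishes on the whole `F`-span of the `aⱼ`, which has `q^k` elements when the `aⱼ` are
independent, while `P ≠ 0` has degree at most `q^{k-1}`. Conversely an `F`-linear relation among
the `aⱼ` is, after applying the Frobenius powers, a relation among the columns.
-/

open Matrix Polynomial Finset

section KWise

variable {R M ι : Type*} [Semiring R] [AddCommMonoid M] [Module R M]

variable (R) in
def KWiseLinearIndependent (k : ℕ) (v : ι → M) : Prop :=
  ∀ s : Finset ι, #s ≤ k → LinearIndepOn R v s

theorem kWiseLinearIndependent_iff_comp_injective [Fintype ι] {k : ℕ} (hk : k ≤ Fintype.card ι)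
    (v : ι → M) :
    KWiseLinearIndependent R k v ↔
      ∀ f : Fin k → ι, Function.Injective f → LinearIndependent R (v ∘ f) := by
  classical
  constructor
  · intro hv f hf
    rw [← linearIndepOn_range_iff hf]
    convert hv (univ.image f) (card_image_le.trans_eq (by simp))
    simp
  · intro hv s hs
    obtain ⟨t, hst, rfl⟩ := exists_superset_card_eq hs hk
    let f : Fin #t → ι := (↑) ∘ (t.equivFin).symm
    have hf : Function.Injective f := Subtype.val_injective.comp t.equivFin.symm.injective
    have hrange : Set.range f = t := by simp [f, Set.range_comp]
    exact (hrange ▸ (linearIndepOn_range_iff hf v).2 (hv f hf)).mono (by simpa using hst)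

end KWise

def mooreMatrix {ι K : Type*} [Monoid K] (q k : ℕ) (v : ι → K) : Matrix (Fin k) ι K :=
  of fun i j => v j ^ q ^ (i : ℕ)

theorem submatrix_mooreMatrix {ι κ K : Type*} [Monoid K] (q k : ℕ) (v : ι → K) (f : κ → ι) :
    (mooreMatrix q k v).submatrix id f = mooreMatrix q k (v ∘ f) :=
  rfl

section LinearizedPoly

variable {K : Type*} [Semiring K] (q : ℕ) {k : ℕ} (c : Fin k → K)

noncomputable def linearizedPoly : K[X] :=
  ∑ i, C (c i) * X ^ q ^ (i : ℕ)

theorem eval_linearizedPoly (x : K) :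
    (linearizedPoly q c).eval x = ∑ i, c i * x ^ q ^ (i : ℕ) := by
  simp [linearizedPoly, eval_finsetSum]

variable {q}

theorem coeff_linearizedPoly_pow (hq : 1 < q) (i : Fin k) :
    (linearizedPoly q c).coeff (q ^ (i : ℕ)) = c i := by
  rw [linearizedPoly, finsetSum_coeff, sum_eq_single i]
  · simp
  · intro j _ hji
    have : q ^ (i : ℕ) ≠ q ^ (j : ℕ) := fun h => hji (Fin.ext (Nat.pow_right_injective hq h).symm)
    simp [coeff_C_mul, coeff_X_pow, this]
  · simp

theorem linearizedPoly_ne_zero (hq : 1 < q) {c : Fin k → K} (hc : c ≠ 0) :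
    linearizedPoly q c ≠ 0 := by
  obtain ⟨i, hi⟩ := Function.ne_iff.1 hc
  intro h
  exact hi (by simpa [h] using (coeff_linearizedPoly_pow c hq i).symm)

theorem natDegree_linearizedPoly_lt (hq : 1 < q) : (linearizedPoly q c).natDegree < q ^ k := by
  rcases k.eq_zero_or_pos with rfl | hk
  · simp [linearizedPoly]
  calc (linearizedPoly q c).natDegree ≤ q ^ (k - 1) :=
        natDegree_sum_le_of_forall_le _ _ fun i _ =>
          (natDegree_C_mul_le _ _).trans <| (natDegree_X_pow_le _).trans <|
            Nat.pow_le_pow_right hq.le (Nat.le_sub_one_of_lt i.isLt)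
    _ < q ^ k := Nat.pow_lt_pow_right hq (Nat.sub_lt hk one_pos)

end LinearizedPoly

section FiniteField

variable {F K ι : Type*} [Field F] [Fintype F] [Field K] [Algebra F K] [Fintype ι] {k : ℕ}

theorem pow_card_pow_linearCombination (v : ι → K) (w : ι → F) (t : ℕ) :
    Fintype.linearCombination F v w ^ Fintype.card F ^ t =
      Fintype.linearCombination F (fun j => v j ^ Fintype.card F ^ t) w := by
  have hfrob : ∀ x : K, x ^ Fintype.card F ^ t = (FiniteField.frobeniusAlgHom F K ^ t) x := by
    intro x
    rw [AlgHom.coe_pow, FiniteField.coe_frobeniusAlgHom, pow_iterate]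
  simp only [hfrob, Fintype.linearCombination_apply, map_sum, map_smul]

theorem eval_linearizedPoly_linearCombination (c : Fin k → K) (v : ι → K) (w : ι → F) :
    (linearizedPoly (Fintype.card F) c).eval (Fintype.linearCombination F v w) =
      Fintype.linearCombination F (fun j => (linearizedPoly (Fintype.card F) c).eval (v j)) w := by
  simp only [eval_linearizedPoly, pow_card_pow_linearCombination]
  simp only [Fintype.linearCombination_apply, mul_sum, smul_sum, mul_smul_comm]
  exact sum_comm

theorem pow_card_le_natDegree_linearizedPoly {c : Fin k → K} (hc : c ≠ 0) {v : ι → K}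
    (hv : LinearIndependent F v) (hroot : ∀ j, (linearizedPoly (Fintype.card F) c).eval (v j) = 0) :
    Fintype.card F ^ Fintype.card ι ≤ (linearizedPoly (Fintype.card F) c).natDegree := by
  classical
  have hP := linearizedPoly_ne_zero (Fintype.one_lt_card (α := F)) hc
  calc Fintype.card F ^ Fintype.card ι = #(univ.image (Fintype.linearCombination F v)) := by
        rw [card_image_of_injective _ hv.fintypeLinearCombination_injective]
        simp
    _ ≤ _ := card_le_degree_of_subset_roots fun z hz => by
        obtain ⟨w, -, rfl⟩ := mem_image.1 hz
        rw [mem_roots hP, IsRoot, eval_linearizedPoly_linearCombination]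
        simp [hroot, Fintype.linearCombination_apply]

theorem mooreMatrix_mulVec_algebraMap (v : ι → K) (w : ι → F) :
    mooreMatrix (Fintype.card F) k v *ᵥ (fun j => algebraMap F K (w j)) =
      fun i : Fin k => Fintype.linearCombination F v w ^ Fintype.card F ^ (i : ℕ) := by
  ext i
  rw [pow_card_pow_linearCombination]
  simp [Fintype.linearCombination_apply, mooreMatrix, mulVec, dotProduct, Algebra.smul_def,
    mul_comm]

theorem det_mooreMatrix_ne_zero {v : Fin k → K} (hv : LinearIndependent F v) :
    (mooreMatrix (Fintype.card F) k v).det ≠ 0 := by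
  classical
  intro hdet
  obtain ⟨c, hc, hcM⟩ := exists_vecMul_eq_zero_iff.2 hdet
  have hroot : ∀ j, (linearizedPoly (Fintype.card F) c).eval (v j) = 0 := fun j => by
    simpa [eval_linearizedPoly, vecMul, dotProduct, mooreMatrix] using congrFun hcM j
  have hle := pow_card_le_natDegree_linearizedPoly hc hv hroot
  rw [Fintype.card_fin] at hle
  exact hle.not_gt (natDegree_linearizedPoly_lt c Fintype.one_lt_card)

theorem linearIndependent_of_det_mooreMatrix_ne_zero {v : Fin k → K}
    (h : (mooreMatrix (Fintype.card F) k v).det ≠ 0) : LinearIndependent F v := by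
  classical
  refine Fintype.linearIndependent_iff.2 fun w hw => ?_
  by_contra! ⟨i, hi⟩
  refine h (exists_mulVec_eq_zero_iff.1 ⟨fun j => algebraMap F K (w j), fun h0 => hi ?_, ?_⟩)
  · simpa using congrFun h0 i
  · rw [mooreMatrix_mulVec_algebraMap, Fintype.linearCombination_apply, hw]
    ext
    simp [Fintype.card_ne_zero (α := F)]

theorem det_mooreMatrix_ne_zero_iff {v : Fin k → K} :
    (mooreMatrix (Fintype.card F) k v).det ≠ 0 ↔ LinearIndependent F v :=
  ⟨linearIndependent_of_det_mooreMatrix_ne_zero, det_mooreMatrix_ne_zero⟩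

end FiniteField

theorem moore_matrix_mds_iff_kwise_independent_general
    (F K : Type*) [Field F] [Fintype F] [Field K] [Algebra F K]
    (q : ℕ) (hq : q = Fintype.card F)
    (k n : ℕ) (hkn : k ≤ n) (a : Fin n → K)
    (M : Matrix (Fin k) (Fin n) K) (hM : ∀ i j, M i j = a j ^ q ^ (i : ℕ)) :
    (∀ f : Fin k → Fin n, Function.Injective f → IsUnit (M.submatrix id f).det) ↔
      (∀ s : Finset (Fin n), s.card ≤ k →
        LinearIndependent F (fun j : s => a (j : Fin n))) := by
  subst hq
  obtain rfl : M = mooreMatrix (Fintype.card F) k a := Matrix.ext hM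
  simp_rw [submatrix_mooreMatrix, isUnit_iff_ne_zero, det_mooreMatrix_ne_zero_iff]
  exact (kWiseLinearIndependent_iff_comp_injective (by simpa using hkn) a).symm

/-- **Moore matrix / MDS criterion.** Let `q` be the size of the finite field `F`,
`K` an extension of `F` of degree `m`, and `a 1, ..., a n ∈ K`. The `k × n` Moore matrix
`M i j = (a j) ^ (q ^ i)` has all of its `k × k` submatrices invertible (equivalently, it
generates an `[n, k]` MDS code) if and only if `a 1, ..., a n` are `k`-wise linearly
independent over `F`. -/
theorem moore_matrix_mds_iff_kwise_independent
    (F K : Type*) [Field F] [Fintype F] [Field K] [Algebra F K]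
    (q : ℕ) (hq : q = Fintype.card F)
    (m : ℕ) (hm : Module.finrank F K = m)
    (k n : ℕ) (hkn : k ≤ n) (a : Fin n → K)
    (M : Matrix (Fin k) (Fin n) K) (hM : ∀ i j, M i j = a j ^ q ^ (i : ℕ)) :
    (∀ f : Fin k → Fin n, Function.Injective f → IsUnit (M.submatrix id f).det) ↔
      (∀ s : Finset (Fin n), s.card ≤ k →
        LinearIndependent F (fun j : s => a (j : Fin n))) :=
  moore_matrix_mds_iff_kwise_independent_general F K q hq k n hkn a M hM
end

section
/- Let C_1,...,C_h be a×(a+1) matrices and D_1,...,D_h be h×(a+1) matrices over a field, and let D_i^{(j)} denote the j-th row of D_i. Then the determinant of the (ah+h)×(ah+h) block matrix whose upper-left is the block-diagonal matrix diag(C_1,...,C_h) and whose bottom h rows are [D_1 D_2 ... D_h] equals (-1)^{ah(h-1)/2} times the determinant of the h×h matrix whose (j,i) entry is det of the (a+1)×(a+1) matrix obtained by stacking C_i on top of the row D_i^{(j)}. -/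
/-!
Order the rows of `B` so that the `j`-th bottom row follows the rows of `C j`. This row
permutation has one inversion for each row of a block `C i` and each bottom row `j < i`, hence
`a * h * (h - 1) / 2` inversions.

In the reordered matrix the determinant is an alternating multilinear function of the `h` bottom
rows, and so is the determinant of the `h × h` matrix of minors `det [C i; row j of D i]`. The two
agree on standard basis vectors `e (v j)`. If the blocks of the `v j` miss a block `i₀`, both
vanish: the `a + 1` columns of block `i₀` are supported on the `a` rows of `C i₀`, and column `i₀`
of the matrix of minors is zero. Otherwise the blocks of the `v j` form a permutation `π`; both
sides pick up `sign π` when the rows are permuted, and for `π = 1` both matrices are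
(block) diagonal, with the same determinant `∏ i, det [C i; e (v i)]`.
-/

open Matrix Equiv Finset

theorem Equiv.Perm.sign_symm_trans_eq_neg_one_pow {X : Type*} [Fintype X] [DecidableEq X] {n : ℕ}
    (e₁ e₂ : X ≃ Fin n) :
    Perm.sign (e₁.symm.trans e₂) = (-1) ^ #{p : X × X | e₁ p.2 < e₁ p.1 ∧ e₂ p.1 < e₂ p.2} := by
  set σ : Perm (Fin n) := e₁.symm.trans e₂
  have hcard : #{p : X × X | e₁ p.2 < e₁ p.1 ∧ e₂ p.1 < e₂ p.2} =
      #{p : Fin n × Fin n | p.2 < p.1 ∧ σ p.1 < σ p.2} :=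
    card_equiv (e₁.prodCongr e₁) fun p => by
      simp only [mem_filter, mem_univ, true_and]
      simp [σ]
  rw [hcard, σ.sign_eq_prod_prod_Iio, ← prod_const, prod_filter, Fintype.prod_prod_type]
  refine prod_congr rfl fun j _ => ?_
  rw [← filter_gt_eq_Iio, prod_filter]
  refine prod_congr rfl fun i _ => ?_
  by_cases hij : i < j
  · have hne : σ i ≠ σ j := σ.injective.ne hij.ne
    rcases hne.lt_or_gt with h | h <;> simp [hij, h, h.not_gt]
  · simp [hij]

theorem Nat.mul_add_lt_mul_add_iff {m i j r s : ℕ} (hr : r < m) (hs : s < m) :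
    i * m + r < j * m + s ↔ i < j ∨ i = j ∧ r < s := by
  constructor
  · intro h
    rcases lt_trichotomy i j with hij | rfl | hij
    · exact .inl hij
    · exact .inr ⟨rfl, by omega⟩
    · nlinarith
  · rintro (hij | ⟨rfl, hrs⟩)
    · nlinarith
    · omega

def finSuccProdEquivSum (a : ℕ) (ι : Type*) : Fin (a + 1) × ι ≃ (Fin a × ι) ⊕ ι where
  toFun p := Fin.lastCases (.inr p.2) (fun r => .inl (r, p.2)) p.1
  invFun := Sum.elim (fun p => (p.1.castSucc, p.2)) (fun i => (Fin.last a, i))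
  left_inv := by
    rintro ⟨c, i⟩
    induction c using Fin.lastCases <;> simp
  right_inv := by rintro (⟨r, i⟩ | i) <;> simp

@[simp] theorem finSuccProdEquivSum_castSucc {a : ℕ} {ι : Type*} (r : Fin a) (i : ι) :
    finSuccProdEquivSum a ι (r.castSucc, i) = .inl (r, i) := by
  simp [finSuccProdEquivSum]

@[simp] theorem finSuccProdEquivSum_last {a : ℕ} {ι : Type*} (i : ι) :
    finSuccProdEquivSum a ι (Fin.last a, i) = .inr i := by
  simp [finSuccProdEquivSum]

section Indexing

variable {a h : ℕ}

/- Rows and columns of the `h * (a + 1)`-square matrix of the theorem, indexed by pairs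
`(c, i)` = (position inside block `i`, block `i`). For rows, `(r.castSucc, i)` is row `r` of
`C i`, while `(Fin.last a, j)` is the `j`-th of the bottom rows. -/
variable (a h) in
def rowIndex : Fin (a + 1) × Fin h ≃ Fin (h * (a + 1)) :=
  (finSuccProdEquivSum a (Fin h)).trans <|
    (sumCongr ((prodComm _ _).trans finProdFinEquiv) (Equiv.refl _)).trans <|
      finSumFinEquiv.trans (finCongr (by ring))

variable (a h) in
def colIndex : Fin (a + 1) × Fin h ≃ Fin (h * (a + 1)) :=
  (prodComm _ _).trans finProdFinEquiv

@[simp] theorem rowIndex_castSucc (r : Fin a) (i : Fin h) :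
    (rowIndex a h (r.castSucc, i) : ℕ) = i * a + r := by
  simp only [rowIndex, trans_apply, finSuccProdEquivSum_castSucc, sumCongr_apply, Sum.map_inl]
  exact (by ring : (r : ℕ) + a * i = i * a + r)

@[simp] theorem rowIndex_last (j : Fin h) : (rowIndex a h (Fin.last a, j) : ℕ) = h * a + j := by
  simp only [rowIndex, trans_apply, finSuccProdEquivSum_last, sumCongr_apply, Sum.map_inr]
  rfl

@[simp] theorem colIndex_apply (c : Fin (a + 1)) (i : Fin h) :
    (colIndex a h (c, i) : ℕ) = i * (a + 1) + c := by
  simp [colIndex, finProdFinEquiv]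
  ring

theorem rowIndex_lt_and_colIndex_lt_iff (p q : Fin (a + 1) × Fin h) :
    rowIndex a h q < rowIndex a h p ∧ colIndex a h p < colIndex a h q ↔
      p.1 = Fin.last a ∧ q.1 ≠ Fin.last a ∧ p.2 < q.2 := by
  obtain ⟨c, i⟩ := p
  obtain ⟨d, j⟩ := q
  have hi := i.isLt
  have hj := j.isLt
  induction c using Fin.lastCases with
  | last =>
    induction d using Fin.lastCases with
    | last =>
      have := Nat.mul_add_lt_mul_add_iff (i := i) (j := j) (Nat.lt_add_one a) (Nat.lt_add_one a)
      simp only [Fin.lt_def, rowIndex_last, colIndex_apply, Fin.val_last]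
      simp
      omega
    | cast s =>
      have hs : j * a + s < h * a := by nlinarith [s.isLt]
      have := Nat.mul_add_lt_mul_add_iff (i := i) (j := j) (Nat.lt_add_one a)
        (Nat.lt_add_one_of_lt s.isLt)
      simp only [Fin.lt_def, rowIndex_last, rowIndex_castSucc, colIndex_apply, Fin.val_last,
        Fin.val_castSucc]
      simp
      omega
  | cast r =>
    induction d using Fin.lastCases with
    | last =>
      have hr : i * a + r < h * a := by nlinarith [r.isLt]
      simp only [Fin.lt_def, rowIndex_last, rowIndex_castSucc, colIndex_apply]
      simp
      omega
    | cast s =>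
      have := Nat.mul_add_lt_mul_add_iff (i := j) (j := i) s.isLt r.isLt
      have := Nat.mul_add_lt_mul_add_iff (i := i) (j := j) (Nat.lt_add_one_of_lt r.isLt)
        (Nat.lt_add_one_of_lt s.isLt)
      simp only [Fin.lt_def, rowIndex_castSucc, colIndex_apply, Fin.val_castSucc]
      simp
      omega

theorem card_rowIndex_colIndex_inversions :
    #{p : (Fin (a + 1) × Fin h) × (Fin (a + 1) × Fin h) |
      rowIndex a h p.2 < rowIndex a h p.1 ∧ colIndex a h p.1 < colIndex a h p.2} =
      a * h.choose 2 := by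
  simp_rw [rowIndex_lt_and_colIndex_lt_iff]
  have hcard := card_equiv (prodProdProdComm (Fin (a + 1)) (Fin h) (Fin (a + 1)) (Fin h))
    (s := {p | p.1.1 = Fin.last a ∧ p.2.1 ≠ Fin.last a ∧ p.1.2 < p.2.2})
    (t := ({Fin.last a} ×ˢ univ.erase (Fin.last a)) ×ˢ
      ({q | q.1 < q.2} : Finset (Fin h × Fin h)))
    fun ⟨⟨c, i⟩, ⟨d, j⟩⟩ => by
      simp only [prodProdProdComm_apply, mem_product, mem_singleton, mem_erase, mem_univ,
        mem_filter, true_and, and_true, ne_eq]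
      tauto
  rw [hcard, card_product, Fintype.card_product_filter_lt, Fintype.card_fin]
  simp

theorem sign_rowIndex_symm_trans_colIndex :
    Perm.sign ((rowIndex a h).symm.trans (colIndex a h)) = (-1) ^ (a * h * (h - 1) / 2) := by
  rw [Perm.sign_symm_trans_eq_neg_one_pow, card_rowIndex_colIndex_inversions,
    Nat.choose_two_right, ← Nat.mul_div_assoc _ (Nat.even_mul_pred_self h).two_dvd, mul_assoc]

end Indexing

namespace Matrix

variable {R : Type*}

section SnocRow

variable {a : ℕ} {n : Type*}

def snocRow (C : Matrix (Fin a) n R) (v : n → R) : Matrix (Fin (a + 1)) n R :=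
  of fun r c => if hr : (r : ℕ) < a then C ⟨r, hr⟩ c else v c

@[simp] theorem snocRow_last (C : Matrix (Fin a) n R) (v : n → R) :
    C.snocRow v (Fin.last a) = v := by
  ext
  simp [snocRow]

@[simp] theorem snocRow_castSucc (C : Matrix (Fin a) n R) (v : n → R) (r : Fin a) :
    C.snocRow v r.castSucc = C r := by
  ext
  simp [snocRow]

theorem updateRow_snocRow_last (C : Matrix (Fin a) n R) (v w : n → R) :
    (C.snocRow w).updateRow (Fin.last a) v = C.snocRow v := by
  ext r : 1
  induction r using Fin.lastCases <;> simp

end SnocRow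

variable [CommRing R]

theorem det_submatrix_symm_symm {X n : Type*} [Fintype X] [DecidableEq X] [Fintype n]
    [DecidableEq n] (M : Matrix X X R) (e₁ e₂ : X ≃ n) :
    (M.submatrix e₁.symm e₂.symm).det = Perm.sign (e₁.symm.trans e₂) * M.det := by
  have : M.submatrix e₁.symm e₂.symm =
      (M.submatrix e₂.symm e₂.symm).submatrix (e₁.symm.trans e₂) id := by
    ext
    simp
  rw [this, det_permute, det_submatrix_equiv_self]

def detFromRows {m n ι : Type*} [Fintype n] [DecidableEq n] (T : Matrix m n R)
    (e : n ≃ m ⊕ ι) : (n → R) [⋀^ι]→ₗ[R] R where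
  toMultilinearMap :=
    ((detRowAlternating : (n → R) [⋀^n]→ₗ[R] R).toMultilinearMap.domDomCongr e).currySum T
  map_eq_zero_of_eq' E j k hjk hne :=
    det_zero_of_row_eq (i := e.symm (.inr j)) (j := e.symm (.inr k)) (by simpa using hne)
      (by simpa using hjk)

theorem detFromRows_apply {m n ι : Type*} [Fintype n] [DecidableEq n] (T : Matrix m n R)
    (e : n ≃ m ⊕ ι) (E : Matrix ι n R) :
    detFromRows T e E = ((fromRows T E).submatrix e id).det :=
  rfl

theorem exists_mulVec_eq_zero_of_card_lt {F m n : Type*} [Field F] [Fintype m] [Fintype n]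
    (C : Matrix m n F) (h : Fintype.card m < Fintype.card n) : ∃ g ≠ 0, C *ᵥ g = 0 := by
  obtain ⟨g, hg, hg0⟩ := (Submodule.ne_bot_iff _).mp
    (LinearMap.ker_ne_bot_of_finrank_lt (f := C.mulVecLin) (by simpa using h))
  exact ⟨g, hg0, hg⟩

variable {a : ℕ}

def snocDet (C : Matrix (Fin a) (Fin (a + 1)) R) : (Fin (a + 1) → R) →ₗ[R] R :=
  (detRowAlternating : (Fin (a + 1) → R) [⋀^Fin (a + 1)]→ₗ[R] R).toMultilinearMap.toLinearMap
    (C.snocRow 0) (Fin.last a)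

theorem snocDet_apply (C : Matrix (Fin a) (Fin (a + 1)) R) (v : Fin (a + 1) → R) :
    snocDet C v = (C.snocRow v).det :=
  congrArg det (updateRow_snocRow_last C v 0)

def blockSnocDet {ι : Type*} (C : ι → Matrix (Fin a) (Fin (a + 1)) R) :
    (Fin (a + 1) × ι → R) →ₗ[R] (ι → R) :=
  LinearMap.pi fun i => snocDet (C i) ∘ₗ LinearMap.funLeft R R (·, i)

theorem blockSnocDet_apply {ι : Type*} (C : ι → Matrix (Fin a) (Fin (a + 1)) R)
    (v : Fin (a + 1) × ι → R) (i : ι) :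
    blockSnocDet C v i = snocDet (C i) fun c => v (c, i) :=
  rfl

section Blockwise

variable {ι : Type*} [DecidableEq ι] (C : ι → Matrix (Fin a) (Fin (a + 1)) R)
  (E : Matrix ι (Fin (a + 1) × ι) R) (hE : ∀ j c i, i ≠ j → E j (c, i) = 0)
include hE

theorem fromRows_blockDiagonal_submatrix_eq_blockDiagonal :
    (fromRows (blockDiagonal C) E).submatrix (finSuccProdEquivSum a ι) id =
      blockDiagonal fun i => (C i).snocRow fun c => E i (c, i) := by
  ext ⟨r, i⟩ ⟨c, k⟩
  induction r using Fin.lastCases with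
  | last =>
    by_cases hki : k = i
    · simp [hki]
    · simp [hE i c k hki, blockDiagonal_apply, Ne.symm hki]
  | cast r => simp [blockDiagonal_apply]

theorem blockSnocDet_eq_pi_single (j : ι) :
    blockSnocDet C (E j) = Pi.single j (snocDet (C j) fun c => E j (c, j)) := by
  ext i
  by_cases hij : i = j
  · subst hij
    simp [blockSnocDet_apply]
  · have : (fun c => E j (c, i)) = 0 := funext fun c => hE j c i hij
    simp [blockSnocDet_apply, hij, this]

theorem detFromRows_blockDiagonal_of_blockwise [Fintype ι] :
    detFromRows (blockDiagonal C) (finSuccProdEquivSum a ι) E =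
      (of fun j => blockSnocDet C (E j)).det := by
  have hdiag : (of fun j => blockSnocDet C (E j)) =
      diagonal fun j => snocDet (C j) fun c => E j (c, j) := by
    ext j i
    simp [blockSnocDet_eq_pi_single C E hE, diagonal_apply, Pi.single_apply, eq_comm]
  rw [detFromRows_apply, fromRows_blockDiagonal_submatrix_eq_blockDiagonal C E hE, hdiag,
    det_blockDiagonal, det_diagonal]
  simp [snocDet_apply]

end Blockwise

section MissedBlock

variable {ι : Type*} [Fintype ι] [DecidableEq ι]

theorem detFromRows_blockDiagonal_eq_zero {F : Type*} [Field F]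
    (C : ι → Matrix (Fin a) (Fin (a + 1)) F) (E : Matrix ι (Fin (a + 1) × ι) F) (i₀ : ι)
    (hE : ∀ j c, E j (c, i₀) = 0) :
    detFromRows (blockDiagonal C) (finSuccProdEquivSum a ι) E = 0 := by
  obtain ⟨g, hg0, hg⟩ := exists_mulVec_eq_zero_of_card_lt (C i₀) (by simp)
  obtain ⟨c₀, hc₀⟩ := Function.ne_iff.mp hg0
  set y : Fin (a + 1) × ι → F := fun q => if q.2 = i₀ then g q.1 else 0
  have hT : blockDiagonal C *ᵥ y = 0 := by
    ext ⟨r, i⟩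
    by_cases hi : i = i₀
    · subst hi
      simpa [y, mulVec, dotProduct, blockDiagonal_apply, Fintype.sum_prod_type] using
        congrFun hg r
    · simp [y, mulVec, dotProduct, blockDiagonal_apply, Fintype.sum_prod_type, hi]
  have hB : E *ᵥ y = 0 := by
    ext j
    simp [y, mulVec, dotProduct, Fintype.sum_prod_type, hE]
  have hM : fromRows (blockDiagonal C) E *ᵥ y = 0 := by
    rw [fromRows_mulVec, hT, hB]
    ext (_ | _) <;> rfl
  rw [detFromRows_apply, ← exists_mulVec_eq_zero_iff]
  exact ⟨y, fun h => hc₀ (by simpa [y] using congrFun h (c₀, i₀)),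
    funext fun p => congrFun hM (finSuccProdEquivSum a ι p)⟩

theorem det_blockSnocDet_eq_zero (C : ι → Matrix (Fin a) (Fin (a + 1)) R)
    (E : Matrix ι (Fin (a + 1) × ι) R) (i₀ : ι) (hE : ∀ j c, E j (c, i₀) = 0) :
    (of fun j => blockSnocDet C (E j)).det = 0 :=
  det_eq_zero_of_column_eq_zero i₀ fun j => by
    simp [blockSnocDet_apply, hE, ← Pi.zero_def]

end MissedBlock

theorem detFromRows_blockDiagonal {F ι : Type*} [Field F] [Fintype ι] [DecidableEq ι]
    (C : ι → Matrix (Fin a) (Fin (a + 1)) F) :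
    detFromRows (blockDiagonal C) (finSuccProdEquivSum a ι) =
      (detRowAlternating : (ι → F) [⋀^ι]→ₗ[F] F).compLinearMap (blockSnocDet C) := by
  refine (Pi.basisFun F (Fin (a + 1) × ι)).ext_alternating fun v _ => ?_
  simp only [Pi.basisFun_apply]
  by_cases hb : Function.Bijective fun j => (v j).2
  · set π := Equiv.ofBijective _ hb
    let E : Matrix ι (Fin (a + 1) × ι) F := fun i => Pi.single (v (π.symm i)) 1
    have hE : ∀ j c i, i ≠ j → E j (c, i) = 0 := fun j c i hij =>
      Pi.single_eq_of_ne (fun h => hij ((congrArg Prod.snd h).trans (π.apply_symm_apply j))) _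
    have hv : (fun j => Pi.single (v j) (1 : F)) = E ∘ π := by
      funext j
      simp [E]
    rw [hv, AlternatingMap.map_perm, AlternatingMap.map_perm,
      detFromRows_blockDiagonal_of_blockwise C E hE]
    rfl
  · obtain ⟨i₀, hi₀⟩ : ∃ i₀, ∀ j, (v j).2 ≠ i₀ := by
      by_contra! h
      exact hb (Finite.surjective_iff_bijective.mp h)
    have hE : ∀ j c, (Pi.single (v j) (1 : F) : Fin (a + 1) × ι → F) (c, i₀) = 0 := fun j c =>
      Pi.single_eq_of_ne (fun h => hi₀ j (by simp [← h])) _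
    rw [detFromRows_blockDiagonal_eq_zero C _ i₀ hE, AlternatingMap.compLinearMap_apply]
    exact (det_blockSnocDet_eq_zero C _ i₀ hE).symm

end Matrix

/-- **Block determinant identity (Lemma diag-id).** For `a × (a+1)` matrices `C 1, ..., C h`
and `h × (a+1)` matrices `D 1, ..., D h`, the determinant of the `(ah+h) × (ah+h)` matrix
with block-diagonal blocks `C i` on top and the bottom `h` rows given by `[D 1 D 2 ⋯ D h]`
equals `(-1)^(ah(h-1)/2)` times the determinant of the `h × h` matrix whose `(j, i)` entry is
the determinant of the `(a+1) × (a+1)` matrix obtained by stacking `C i` on top of the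
`j`-th row of `D i`. -/
theorem det_blockDiagonal_with_bottom_rows
    (F : Type*) [Field F] (a h : ℕ)
    (C : Fin h → Matrix (Fin a) (Fin (a+1)) F)
    (D : Fin h → Matrix (Fin h) (Fin (a+1)) F)
    (B : Matrix (Fin (h*(a+1))) (Fin (h*(a+1))) F)
    -- the first `h*a` rows: block-diagonal arrangement of the `C i`
    (hBtop : ∀ (i : Fin h) (r : Fin a) (i' : Fin h) (c : Fin (a+1)),
      B ⟨(i : ℕ) * a + r, by
            have h1 : (i : ℕ) + 1 ≤ h := i.isLt
            have h2 : (i : ℕ) * a + (r : ℕ) < ((i : ℕ) + 1) * a := by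
              have := r.isLt; nlinarith
            have h3 : ((i : ℕ) + 1) * a ≤ h * (a+1) := by nlinarith
            omega⟩
        ⟨(i' : ℕ) * (a+1) + c, by
            have h1 : (i' : ℕ) + 1 ≤ h := i'.isLt
            have h2 : (i' : ℕ) * (a+1) + (c : ℕ) < ((i' : ℕ) + 1) * (a+1) := by
              have := c.isLt; nlinarith
            have h3 : ((i' : ℕ) + 1) * (a+1) ≤ h * (a+1) := by nlinarith
            omega⟩ = if i = i' then C i r c else 0)
    -- the last `h` rows: the juxtaposition `[D 1 D 2 ⋯ D h]`
    (hBbot : ∀ (j : Fin h) (i' : Fin h) (c : Fin (a+1)),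
      B ⟨h * a + j, by
            have h1 : (j : ℕ) < h := j.isLt
            have h2 : h * (a+1) = h * a + h := by ring
            omega⟩
        ⟨(i' : ℕ) * (a+1) + c, by
            have h1 : (i' : ℕ) + 1 ≤ h := i'.isLt
            have h2 : (i' : ℕ) * (a+1) + (c : ℕ) < ((i' : ℕ) + 1) * (a+1) := by
              have := c.isLt; nlinarith
            have h3 : ((i' : ℕ) + 1) * (a+1) ≤ h * (a+1) := by nlinarith
            omega⟩ = D i' j c) :
    B.det = (-1 : F) ^ (a * h * (h - 1) / 2) *
      (Matrix.of fun (j i : Fin h) =>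
        (Matrix.of fun (r c : Fin (a+1)) =>
          if hr : (r : ℕ) < a then C i ⟨r, hr⟩ c else D i j c).det).det := by
  have htop : ∀ i r i' c, B (rowIndex a h (r.castSucc, i)) (colIndex a h (c, i')) =
      if i = i' then C i r c else 0 := fun i r i' c =>
    (congrArg₂ B (Fin.ext (by simp)) (Fin.ext (by simp))).trans (hBtop i r i' c)
  have hbot : ∀ j i' c, B (rowIndex a h (Fin.last a, j)) (colIndex a h (c, i')) = D i' j c :=
    fun j i' c => (congrArg₂ B (Fin.ext (by simp)) (Fin.ext (by simp))).trans (hBbot j i' c)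
  let Dcat : Matrix (Fin h) (Fin (a + 1) × Fin h) F := of fun j q => D q.2 j q.1
  have hB : B = ((fromRows (blockDiagonal C) Dcat).submatrix (finSuccProdEquivSum a (Fin h))
      id).submatrix (rowIndex a h).symm (colIndex a h).symm := by
    ext x y
    obtain ⟨⟨r, i⟩, rfl⟩ := (rowIndex a h).surjective x
    obtain ⟨⟨c, k⟩, rfl⟩ := (colIndex a h).surjective y
    induction r using Fin.lastCases <;> simp [htop, hbot, Dcat, blockDiagonal_apply]
  rw [hB, det_submatrix_symm_symm, sign_rowIndex_symm_trans_colIndex, ← detFromRows_apply,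
    detFromRows_blockDiagonal]
  push_cast
  refine congrArg _ (congrArg det (funext fun j => funext fun i => ?_))
  rw [blockSnocDet_apply, snocDet_apply]
  rfl
end

section
/- Let C_1 be an a×(a+1) matrix, C_2 an a×(a+2) matrix, D_1 a 3×(a+1) matrix and D_2 a 3×(a+2) matrix over a field, with D_i^{(j)} the j-th row of D_i. Then det of the (2a+3)×(2a+3) block matrix [[C_1, 0],[0, C_2],[D_1, D_2]] equals (-1)^a times ( det([C_1; D_1^{(1)}])·det([C_2; D_2^{(2)}; D_2^{(3)}]) − det([C_1; D_1^{(2)}])·det([C_2; D_2^{(1)}; D_2^{(3)}]) + det([C_1; D_1^{(3)}])·det([C_2; D_2^{(1)}; D_2^{(2)}]) ). -/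
/-!
Moving the first bottom row up past the `a` rows of `C₂` (a cycle of length `a + 1`, sign
`(-1)^a`) turns `B` into the matrix with rows `[C₁ 0]`, `v₀`, `[0 C₂]`, `v₁`, `v₂`, where
`vⱼ = (xⱼ, yⱼ)` are the bottom rows. Split `v₀ = (x₀, 0) + (0, y₀)` by linearity. With
`(x₀, 0)` the matrix is block lower triangular and contributes `det[C₁; x₀] · det[C₂; y₁; y₂]`.
With `(0, y₀)`, swap this row with `v₁` and repeat, then with `v₂`. What is left has the rows
`(0, yⱼ)` only; it is block upper triangular with the singular block `[C₁; 0]`.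
-/

open Equiv Matrix

namespace Matrix

section Blocks

variable {R : Type*} [CommRing R] {m n : Type*} [Fintype m] [Fintype n] [DecidableEq m]
  [DecidableEq n]

theorem det_eq_det_toBlocks_of_toBlocks₁₂_eq_zero (M : Matrix (m ⊕ n) (m ⊕ n) R)
    (h : M.toBlocks₁₂ = 0) : M.det = M.toBlocks₁₁.det * M.toBlocks₂₂.det := by
  conv_lhs => rw [← fromBlocks_toBlocks M, h]
  exact det_fromBlocks_zero₁₂ ..

theorem det_eq_det_toBlocks_of_toBlocks₂₁_eq_zero (M : Matrix (m ⊕ n) (m ⊕ n) R)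
    (h : M.toBlocks₂₁ = 0) : M.det = M.toBlocks₁₁.det * M.toBlocks₂₂.det := by
  conv_lhs => rw [← fromBlocks_toBlocks M, h]
  exact det_fromBlocks_zero₂₁ ..

theorem det_submatrix_swap (M : Matrix m m R) {i j : m} (h : i ≠ j) :
    (M.submatrix (Equiv.swap i j) id).det = -M.det := by
  rw [det_permute, Perm.sign_swap h]
  simp

theorem det_eq_sign_mul_det_submatrix_trans_symm (M : Matrix n n R) (σ : Perm n) (e : m ≃ n) :
    M.det = Perm.sign σ * (M.submatrix (e.trans σ.symm) e).det := by
  rw [show M.submatrix (e.trans σ.symm) e = (M.submatrix σ.symm id).submatrix e e from rfl,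
    det_submatrix_equiv_self, det_permute, Perm.sign_symm, ← mul_assoc, ← Int.cast_mul,
    ← Units.val_mul, Int.units_mul_self, Units.val_one, Int.cast_one, one_mul]

end Blocks

section Snoc

variable {R k : Type*} {m : ℕ}

theorem of_snoc_eq_dite (C : Matrix (Fin m) k R) (x : k → R) :
    of (Fin.snoc (fun i ↦ C i) x) =
      of fun (r : Fin (m + 1)) c ↦ if hr : (r : ℕ) < m then C ⟨r, hr⟩ c else x c := by
  ext r c
  induction r using Fin.lastCases <;> simp

theorem of_snoc_snoc_eq_dite (C : Matrix (Fin m) k R) (y z : k → R) :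
    of (Fin.snoc (Fin.snoc (fun i ↦ C i) y) z) = of fun (r : Fin (m + 2)) c ↦
      if hr : (r : ℕ) < m then C ⟨r, hr⟩ c else if (r : ℕ) = m then y c else z c := by
  ext r c
  induction r using Fin.lastCases with
  | last => simp
  | cast r => induction r using Fin.lastCases <;> simp

end Snoc

variable {R : Type*} [CommRing R] {m n : ℕ}

/-- The matrix with rows `[C₁ 0]`, `v₀`, `[0 C₂]`, `v₁`, `v₂`. -/
def twoBlockThreeRows (C₁ : Matrix (Fin m) (Fin (m + 1)) R) (C₂ : Matrix (Fin n) (Fin (n + 2)) R)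
    (v₀ v₁ v₂ : Fin (m + 1) ⊕ Fin (n + 2) → R) :
    Matrix (Fin (m + 1) ⊕ Fin (n + 2)) (Fin (m + 1) ⊕ Fin (n + 2)) R :=
  of <| Sum.elim (Fin.snoc (fun i ↦ Sum.elim (C₁ i) 0) v₀)
    (Fin.snoc (Fin.snoc (fun i ↦ Sum.elim 0 (C₂ i)) v₁) v₂)

variable (C₁ : Matrix (Fin m) (Fin (m + 1)) R) (C₂ : Matrix (Fin n) (Fin (n + 2)) R)
  (v₀ v₁ v₂ : Fin (m + 1) ⊕ Fin (n + 2) → R)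

theorem toBlocks₁₁_twoBlockThreeRows :
    (twoBlockThreeRows C₁ C₂ v₀ v₁ v₂).toBlocks₁₁ =
      of (Fin.snoc (fun i ↦ C₁ i) (v₀ ∘ Sum.inl)) := by
  ext i j
  induction i using Fin.lastCases <;> simp [twoBlockThreeRows, toBlocks₁₁]

theorem toBlocks₁₂_twoBlockThreeRows :
    (twoBlockThreeRows C₁ C₂ v₀ v₁ v₂).toBlocks₁₂ = of (Fin.snoc 0 (v₀ ∘ Sum.inr)) := by
  ext i j
  induction i using Fin.lastCases <;> simp [twoBlockThreeRows, toBlocks₁₂]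

theorem toBlocks₂₁_twoBlockThreeRows :
    (twoBlockThreeRows C₁ C₂ v₀ v₁ v₂).toBlocks₂₁ =
      of (Fin.snoc (Fin.snoc 0 (v₁ ∘ Sum.inl)) (v₂ ∘ Sum.inl)) := by
  ext i j
  induction i using Fin.lastCases with
  | last => simp [twoBlockThreeRows, toBlocks₂₁]
  | cast i => induction i using Fin.lastCases <;> simp [twoBlockThreeRows, toBlocks₂₁]

theorem toBlocks₂₂_twoBlockThreeRows :
    (twoBlockThreeRows C₁ C₂ v₀ v₁ v₂).toBlocks₂₂ =
      of (Fin.snoc (Fin.snoc (fun i ↦ C₂ i) (v₁ ∘ Sum.inr)) (v₂ ∘ Sum.inr)) := by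
  ext i j
  induction i using Fin.lastCases with
  | last => simp [twoBlockThreeRows, toBlocks₂₂]
  | cast i => induction i using Fin.lastCases <;> simp [twoBlockThreeRows, toBlocks₂₂]

theorem det_twoBlockThreeRows_of_comp_inr_eq_zero (h₀ : v₀ ∘ Sum.inr = 0) :
    (twoBlockThreeRows C₁ C₂ v₀ v₁ v₂).det = (of (Fin.snoc (fun i ↦ C₁ i) (v₀ ∘ Sum.inl))).det *
      (of (Fin.snoc (Fin.snoc (fun i ↦ C₂ i) (v₁ ∘ Sum.inr)) (v₂ ∘ Sum.inr))).det := by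
  rw [det_eq_det_toBlocks_of_toBlocks₁₂_eq_zero, toBlocks₁₁_twoBlockThreeRows,
    toBlocks₂₂_twoBlockThreeRows]
  ext i j
  induction i using Fin.lastCases <;> simp [toBlocks₁₂_twoBlockThreeRows, h₀]

theorem det_twoBlockThreeRows_eq_zero_of_comp_inl_eq_zero (h₀ : v₀ ∘ Sum.inl = 0)
    (h₁ : v₁ ∘ Sum.inl = 0) (h₂ : v₂ ∘ Sum.inl = 0) :
    (twoBlockThreeRows C₁ C₂ v₀ v₁ v₂).det = 0 := by
  have hlower : (twoBlockThreeRows C₁ C₂ v₀ v₁ v₂).toBlocks₂₁ = 0 := by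
    rw [toBlocks₂₁_twoBlockThreeRows, h₁, h₂]
    ext i j
    induction i using Fin.lastCases with
    | last => simp
    | cast i => induction i using Fin.lastCases <;> simp
  rw [det_eq_det_toBlocks_of_toBlocks₂₁_eq_zero _ hlower, toBlocks₁₁_twoBlockThreeRows, h₀,
    det_eq_zero_of_row_eq_zero (Fin.last m) (by simp), zero_mul]

theorem updateRow_twoBlockThreeRows (w : Fin (m + 1) ⊕ Fin (n + 2) → R) :
    (twoBlockThreeRows C₁ C₂ w v₁ v₂).updateRow (Sum.inl (Fin.last m)) v₀ =
      twoBlockThreeRows C₁ C₂ v₀ v₁ v₂ := by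
  ext (i | i) j
  · induction i using Fin.lastCases <;> simp [twoBlockThreeRows, updateRow_apply]
  · simp [twoBlockThreeRows, updateRow_apply]

theorem det_twoBlockThreeRows_elim_add (x : Fin (m + 1) → R) (y : Fin (n + 2) → R) :
    (twoBlockThreeRows C₁ C₂ (Sum.elim x y) v₁ v₂).det =
      (twoBlockThreeRows C₁ C₂ (Sum.elim x 0) v₁ v₂).det +
        (twoBlockThreeRows C₁ C₂ (Sum.elim 0 y) v₁ v₂).det := by
  have hsplit : Sum.elim x y = Sum.elim x 0 + Sum.elim (0 : Fin (m + 1) → R) y := by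
    rw [← Sum.elim_add_add, add_zero, zero_add]
  rw [hsplit, ← updateRow_twoBlockThreeRows C₁ C₂ _ v₁ v₂ 0, det_updateRow_add,
    updateRow_twoBlockThreeRows, updateRow_twoBlockThreeRows]

theorem det_twoBlockThreeRows_swap₀₁ :
    (twoBlockThreeRows C₁ C₂ v₁ v₀ v₂).det = -(twoBlockThreeRows C₁ C₂ v₀ v₁ v₂).det := by
  have h : twoBlockThreeRows C₁ C₂ v₁ v₀ v₂ = (twoBlockThreeRows C₁ C₂ v₀ v₁ v₂).submatrix
      (Equiv.swap (Sum.inl (Fin.last m)) (Sum.inr (Fin.last n).castSucc)) id := by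
    ext (i | i) j
    · induction i using Fin.lastCases <;> simp [twoBlockThreeRows, swap_apply_of_ne_of_ne]
    · induction i using Fin.lastCases with
      | last =>
        simp [twoBlockThreeRows, swap_apply_of_ne_of_ne, (Fin.castSucc_lt_last _).ne']
      | cast i =>
        induction i using Fin.lastCases <;> simp [twoBlockThreeRows, swap_apply_of_ne_of_ne]
  rw [h, det_submatrix_swap _ (by simp)]

theorem det_twoBlockThreeRows_swap₀₂ :
    (twoBlockThreeRows C₁ C₂ v₂ v₁ v₀).det = -(twoBlockThreeRows C₁ C₂ v₀ v₁ v₂).det := by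
  have h : twoBlockThreeRows C₁ C₂ v₂ v₁ v₀ = (twoBlockThreeRows C₁ C₂ v₀ v₁ v₂).submatrix
      (Equiv.swap (Sum.inl (Fin.last m)) (Sum.inr (Fin.last (n + 1)))) id := by
    ext (i | i) j
    · induction i using Fin.lastCases <;> simp [twoBlockThreeRows, swap_apply_of_ne_of_ne]
    · induction i using Fin.lastCases with
      | last => simp [twoBlockThreeRows]
      | cast i =>
        induction i using Fin.lastCases <;> simp [twoBlockThreeRows, swap_apply_of_ne_of_ne]
  rw [h, det_submatrix_swap _ (by simp)]

theorem det_twoBlockThreeRows_elim (x₀ x₁ x₂ : Fin (m + 1) → R) (y₀ y₁ y₂ : Fin (n + 2) → R) :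
    (twoBlockThreeRows C₁ C₂ (Sum.elim x₀ y₀) (Sum.elim x₁ y₁) (Sum.elim x₂ y₂)).det =
      (of (Fin.snoc (fun i ↦ C₁ i) x₀)).det * (of (Fin.snoc (Fin.snoc (fun i ↦ C₂ i) y₁) y₂)).det
      - (of (Fin.snoc (fun i ↦ C₁ i) x₁)).det * (of (Fin.snoc (Fin.snoc (fun i ↦ C₂ i) y₀) y₂)).det
      + (of (Fin.snoc (fun i ↦ C₁ i) x₂)).det *
          (of (Fin.snoc (Fin.snoc (fun i ↦ C₂ i) y₀) y₁)).det := by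
  have left {x : Fin (m + 1) → R} (v₁ v₂) := det_twoBlockThreeRows_of_comp_inr_eq_zero C₁ C₂
    (Sum.elim x 0) v₁ v₂ (Sum.elim_comp_inr _ _)
  have right := det_twoBlockThreeRows_eq_zero_of_comp_inl_eq_zero C₁ C₂ (Sum.elim 0 y₂)
    (Sum.elim 0 y₀) (Sum.elim 0 y₁) (Sum.elim_comp_inl _ _) (Sum.elim_comp_inl _ _)
    (Sum.elim_comp_inl _ _)
  rw [det_twoBlockThreeRows_elim_add, left, det_twoBlockThreeRows_swap₀₁ _ _ (Sum.elim x₁ y₁),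
    det_twoBlockThreeRows_elim_add, left, det_twoBlockThreeRows_swap₀₂ _ _ (Sum.elim x₂ y₂),
    det_twoBlockThreeRows_elim_add, left, right]
  simp only [Sum.elim_comp_inl, Sum.elim_comp_inr]
  ring

end Matrix

def twoBlockColEquiv (a : ℕ) : Fin (a + 1) ⊕ Fin (a + 2) ≃ Fin (2 * a + 3) :=
  finSumFinEquiv.trans (finCongr (by omega))

def twoBlockRowCycle (a : ℕ) : Perm (Fin (2 * a + 3)) :=
  Fin.cycleIcc ⟨a, by omega⟩ ⟨2 * a, by omega⟩

/-- Reads the rows of `B`, stacked as `C₁`, `C₂`, `D`, in the row order of `twoBlockThreeRows`. -/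
def twoBlockRowEquiv (a : ℕ) : Fin (a + 1) ⊕ Fin (a + 2) ≃ Fin (2 * a + 3) :=
  (twoBlockColEquiv a).trans (twoBlockRowCycle a).symm

section Indices

variable {a : ℕ}

@[simp]
theorem twoBlockColEquiv_inl (c : Fin (a + 1)) : twoBlockColEquiv a (.inl c) = ⟨c, by omega⟩ :=
  rfl

@[simp]
theorem twoBlockColEquiv_inr (c : Fin (a + 2)) :
    twoBlockColEquiv a (.inr c) = ⟨a + 1 + c, by omega⟩ :=
  rfl

@[simp]
theorem twoBlockRowEquiv_inl_castSucc (r : Fin a) :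
    twoBlockRowEquiv a (.inl r.castSucc) = ⟨r, by omega⟩ := by
  rw [twoBlockRowEquiv, trans_apply, symm_apply_eq, twoBlockRowCycle,
    Fin.cycleIcc_of_lt (Fin.mk_lt_mk.2 r.2)]
  rfl

@[simp]
theorem twoBlockRowEquiv_inl_last :
    twoBlockRowEquiv a (.inl (Fin.last a)) = ⟨2 * a, by omega⟩ := by
  rw [twoBlockRowEquiv, trans_apply, symm_apply_eq, twoBlockRowCycle,
    Fin.cycleIcc_of_last (Fin.mk_le_mk.2 (by omega))]
  rfl

@[simp]
theorem twoBlockRowEquiv_inr_castSucc_castSucc (r : Fin a) :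
    twoBlockRowEquiv a (.inr r.castSucc.castSucc) = ⟨a + r, by omega⟩ := by
  rw [twoBlockRowEquiv, trans_apply, symm_apply_eq, twoBlockRowCycle,
    Fin.cycleIcc_of_ge_of_lt (Fin.mk_le_mk.2 (by omega)) (Fin.mk_lt_mk.2 (by omega)), Fin.ext_iff,
    Fin.val_add_one_of_lt (Fin.mk_lt_mk.2 (by omega)), twoBlockColEquiv_inr]
  simp only [Fin.val_castSucc]
  omega

@[simp]
theorem twoBlockRowEquiv_inr_castSucc_last :
    twoBlockRowEquiv a (.inr (Fin.last a).castSucc) = ⟨2 * a + 1, by omega⟩ := by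
  rw [twoBlockRowEquiv, trans_apply, symm_apply_eq, twoBlockRowCycle,
    Fin.cycleIcc_of_gt (Fin.mk_lt_mk.2 (by omega)), twoBlockColEquiv_inr, Fin.ext_iff]
  simp only [Fin.val_castSucc, Fin.val_last]
  omega

@[simp]
theorem twoBlockRowEquiv_inr_last :
    twoBlockRowEquiv a (.inr (Fin.last (a + 1))) = ⟨2 * a + 2, by omega⟩ := by
  rw [twoBlockRowEquiv, trans_apply, symm_apply_eq, twoBlockRowCycle,
    Fin.cycleIcc_of_gt (Fin.mk_lt_mk.2 (by omega)), twoBlockColEquiv_inr, Fin.ext_iff]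
  simp only [Fin.val_last]
  omega

theorem sign_twoBlockRowCycle : Perm.sign (twoBlockRowCycle a) = (-1) ^ a := by
  rw [twoBlockRowCycle, Fin.sign_cycleIcc_of_le (Fin.mk_le_mk.2 (by omega))]
  congr 1
  show 2 * a - a = a
  omega

end Indices

/-- **Two-block determinant identity (Lemma 2prod-id).** For `C₁` an `a × (a+1)` matrix,
`C₂` an `a × (a+2)` matrix, `D₁` a `3 × (a+1)` matrix and `D₂` a `3 × (a+2)` matrix over a
field, the determinant of the `(2a+3) × (2a+3)` block matrix `[[C₁,0],[0,C₂],[D₁,D₂]]`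
equals `(-1)^a` times
`det[C₁;D₁⁽¹⁾]·det[C₂;D₂⁽²⁾;D₂⁽³⁾] − det[C₁;D₁⁽²⁾]·det[C₂;D₂⁽¹⁾;D₂⁽³⁾]
  + det[C₁;D₁⁽³⁾]·det[C₂;D₂⁽¹⁾;D₂⁽²⁾]`. -/
theorem det_two_block_with_three_bottom_rows
    (F : Type*) [Field F] (a : ℕ)
    (C1 : Matrix (Fin a) (Fin (a+1)) F) (C2 : Matrix (Fin a) (Fin (a+2)) F)
    (D1 : Matrix (Fin 3) (Fin (a+1)) F) (D2 : Matrix (Fin 3) (Fin (a+2)) F)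
    (B : Matrix (Fin (2*a+3)) (Fin (2*a+3)) F)
    (hB11 : ∀ (r : Fin a) (c : Fin (a+1)),
      B ⟨r, by have := r.isLt; omega⟩ ⟨c, by have := c.isLt; omega⟩ = C1 r c)
    (hB12 : ∀ (r : Fin a) (c : Fin (a+2)),
      B ⟨r, by have := r.isLt; omega⟩ ⟨a+1+c, by have := c.isLt; omega⟩ = 0)
    (hB21 : ∀ (r : Fin a) (c : Fin (a+1)),
      B ⟨a+r, by have := r.isLt; omega⟩ ⟨c, by have := c.isLt; omega⟩ = 0)
    (hB22 : ∀ (r : Fin a) (c : Fin (a+2)),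
      B ⟨a+r, by have := r.isLt; omega⟩ ⟨a+1+c, by have := c.isLt; omega⟩ = C2 r c)
    (hB31 : ∀ (j : Fin 3) (c : Fin (a+1)),
      B ⟨2*a+j, by have := j.isLt; omega⟩ ⟨c, by have := c.isLt; omega⟩ = D1 j c)
    (hB32 : ∀ (j : Fin 3) (c : Fin (a+2)),
      B ⟨2*a+j, by have := j.isLt; omega⟩ ⟨a+1+c, by have := c.isLt; omega⟩ = D2 j c) :
    B.det = (-1 : F) ^ a *
      ((Matrix.of fun (r : Fin (a+1)) (c : Fin (a+1)) =>
          if hr : (r : ℕ) < a then C1 ⟨r, hr⟩ c else D1 0 c).det *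
        (Matrix.of fun (r : Fin (a+2)) (c : Fin (a+2)) =>
          if hr : (r : ℕ) < a then C2 ⟨r, hr⟩ c
          else if (r : ℕ) = a then D2 1 c else D2 2 c).det
      - (Matrix.of fun (r : Fin (a+1)) (c : Fin (a+1)) =>
          if hr : (r : ℕ) < a then C1 ⟨r, hr⟩ c else D1 1 c).det *
        (Matrix.of fun (r : Fin (a+2)) (c : Fin (a+2)) =>
          if hr : (r : ℕ) < a then C2 ⟨r, hr⟩ c
          else if (r : ℕ) = a then D2 0 c else D2 2 c).det
      + (Matrix.of fun (r : Fin (a+1)) (c : Fin (a+1)) =>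
          if hr : (r : ℕ) < a then C1 ⟨r, hr⟩ c else D1 2 c).det *
        (Matrix.of fun (r : Fin (a+2)) (c : Fin (a+2)) =>
          if hr : (r : ℕ) < a then C2 ⟨r, hr⟩ c
          else if (r : ℕ) = a then D2 0 c else D2 1 c).det) := by
  have hblocks : B.submatrix (twoBlockRowEquiv a) (twoBlockColEquiv a) = twoBlockThreeRows C1 C2
      (Sum.elim (D1 0) (D2 0)) (Sum.elim (D1 1) (D2 1)) (Sum.elim (D1 2) (D2 2)) := by
    ext (i | i) (j | j)
    · induction i using Fin.lastCases
      · simpa [twoBlockThreeRows] using hB31 0 j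
      · simpa [twoBlockThreeRows] using hB11 _ j
    · induction i using Fin.lastCases
      · simpa [twoBlockThreeRows] using hB32 0 j
      · simpa [twoBlockThreeRows] using hB12 _ j
    · induction i using Fin.lastCases with
      | last => simpa [twoBlockThreeRows] using hB31 2 j
      | cast i =>
        induction i using Fin.lastCases
        · simpa [twoBlockThreeRows] using hB31 1 j
        · simpa [twoBlockThreeRows] using hB21 _ j
    · induction i using Fin.lastCases with
      | last => simpa [twoBlockThreeRows] using hB32 2 j
      | cast i =>
        induction i using Fin.lastCases
        · simpa [twoBlockThreeRows] using hB32 1 j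
        · simpa [twoBlockThreeRows] using hB22 _ j
  have hdet : B.det = Perm.sign (twoBlockRowCycle a) *
      (B.submatrix (twoBlockRowEquiv a) (twoBlockColEquiv a)).det :=
    det_eq_sign_mul_det_submatrix_trans_symm B (twoBlockRowCycle a) (twoBlockColEquiv a)
  rw [hdet, hblocks, det_twoBlockThreeRows_elim, sign_twoBlockRowCycle]
  simp only [of_snoc_eq_dite, of_snoc_snoc_eq_dite]
  push_cast
  rfl
end

section
/- Suppose α_{s,j} (for 1 ≤ s ≤ t_2, 1 ≤ j ≤ n_2) are elements of an extension field F_{q^{M_1}} of F_q that are (δ+1)h_2-wise linearly independent over F_q. For each s, let Δ_s ⊆ [n_2] with |Δ_s| = δ, and let L_s be a δ×(n_2−δ) matrix with entries in F_q. Then the collection of elements { α_{s,j'} + Σ_{j∈Δ_s} (L_s)_{index(j), index(j')} α_{s,j} : 1 ≤ s ≤ t_2, j' ∈ [n_2]∖Δ_s } is h_2-wise linearly independent over F_q. -/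
/-- **Independence after shortening (Lemma on `Ψ_i`).** Suppose the `α s j ∈ F_{q^{M₁}}`
(for `s ∈ [t₂]`, `j ∈ [n₂]`) are `(δ+1)h₂`-wise linearly independent over `F_q`. For each
group `s` let `Δ s ⊆ [n₂]` of size `δ` be the erased coordinates and let `L s` be a matrix
of coefficients with entries in `F_q`. Then the elements
`α s j' + ∑_{j ∈ Δ s} (L s) j j' • α s j`, for `j' ∉ Δ s`, are `h₂`-wise linearly
independent over `F_q`. -/
theorem shortened_elements_h2_wise_independent
    (F K : Type*) [Field F] [Field K] [Algebra F K]
    (t2 n2 δ h2 : ℕ)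
    (α : Fin t2 → Fin n2 → K)
    (hα : ∀ s : Finset (Fin t2 × Fin n2), s.card ≤ (δ + 1) * h2 →
      LinearIndependent F (fun p : s => α p.1.1 p.1.2))
    (Δ : Fin t2 → Finset (Fin n2)) (hΔ : ∀ s, (Δ s).card = δ)
    (L : Fin t2 → Fin n2 → Fin n2 → F) :
    ∀ t : Finset (Fin t2 × Fin n2), (∀ p ∈ t, p.2 ∉ Δ p.1) → t.card ≤ h2 →
      LinearIndependent F (fun p : t =>
        α p.1.1 p.1.2 + ∑ j ∈ Δ p.1.1, L p.1.1 j p.1.2 • α p.1.1 j) := by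
  intro t ht htcard
  classical
  rw [Fintype.linearIndependent_iff]
  intro g hg
  -- extend g to a global function
  set G : Fin t2 × Fin n2 → F := fun q => if h : q ∈ t then g ⟨q, h⟩ else 0 with hG
  -- the support set
  set S : Finset (Fin t2 × Fin n2) :=
    t ∪ t.biUnion (fun p => (Δ p.1).image (fun j => (p.1, j))) with hS
  have htS : t ⊆ S := Finset.subset_union_left
  have himS : ∀ p ∈ t, (Δ p.1).image (fun j => (p.1, j)) ⊆ S := by
    intro p hp
    exact (Finset.subset_biUnion_of_mem (fun p => (Δ p.1).image (fun j => (p.1, j))) hp).trans Finset.subset_union_right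
  have hScard : S.card ≤ (δ + 1) * h2 := by
    calc S.card ≤ t.card + (t.biUnion (fun p => (Δ p.1).image (fun j => (p.1, j)))).card :=
          Finset.card_union_le _ _
      _ ≤ t.card + ∑ p ∈ t, ((Δ p.1).image (fun j => (p.1, j))).card := by
          gcongr; exact Finset.card_biUnion_le
      _ ≤ t.card + ∑ p ∈ t, δ := by
          gcongr with p hp
          exact (Finset.card_image_le).trans_eq (hΔ p.1)
      _ = t.card * (δ + 1) := by
          rw [Finset.sum_const, smul_eq_mul]; ring
      _ ≤ h2 * (δ + 1) := by gcongr
      _ = (δ + 1) * h2 := by ring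
  -- global coefficient function
  set C : Fin t2 × Fin n2 → F := fun q =>
    G q + ∑ p ∈ t, if p.1 = q.1 ∧ q.2 ∈ Δ q.1 then L q.1 q.2 p.2 * G p else 0 with hC
  -- key inner-sum computation
  have hinner : ∀ p ∈ t,
      ∑ q ∈ S, (if p.1 = q.1 ∧ q.2 ∈ Δ q.1 then L q.1 q.2 p.2 * G p else 0) • α q.1 q.2
        = ∑ j ∈ Δ p.1, (L p.1 j p.2 * G p) • α p.1 j := by
    intro p hp
    have hfilter : S.filter (fun q => p.1 = q.1 ∧ q.2 ∈ Δ q.1)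
        = (Δ p.1).image (fun j => (p.1, j)) := by
      ext q
      simp only [Finset.mem_filter, Finset.mem_image]
      constructor
      · rintro ⟨_, h1, h2⟩
        exact ⟨q.2, by rw [h1]; exact h2, by rw [h1]⟩
      · rintro ⟨j, hj, rfl⟩
        exact ⟨himS p hp (Finset.mem_image_of_mem _ hj), rfl, hj⟩
    calc ∑ q ∈ S, (if p.1 = q.1 ∧ q.2 ∈ Δ q.1 then L q.1 q.2 p.2 * G p else 0) • α q.1 q.2
        = ∑ q ∈ S, (if p.1 = q.1 ∧ q.2 ∈ Δ q.1 then (L q.1 q.2 p.2 * G p) • α q.1 q.2 else 0) := by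
          apply Finset.sum_congr rfl; intro q _; split <;> simp
      _ = ∑ q ∈ S.filter (fun q => p.1 = q.1 ∧ q.2 ∈ Δ q.1), (L q.1 q.2 p.2 * G p) • α q.1 q.2 := by
          rw [Finset.sum_filter]
      _ = ∑ j ∈ Δ p.1, (L p.1 j p.2 * G p) • α p.1 j := by
          rw [hfilter, Finset.sum_image (by intro a _ b _ h; exact (Prod.mk.injEq _ _ _ _).mp h |>.2)]
  -- the sum over S with coefficients C vanishes
  have hsum : ∑ q ∈ S, C q • α q.1 q.2 = 0 := by
    have hg' : ∑ p ∈ t, G p • (α p.1 p.2 + ∑ j ∈ Δ p.1, L p.1 j p.2 • α p.1 j) = 0 := by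
      rw [← hg, ← Finset.sum_coe_sort t (fun p => G p • (α p.1 p.2 + ∑ j ∈ Δ p.1, L p.1 j p.2 • α p.1 j))]
      apply Finset.sum_congr rfl
      intro i _
      simp [hG, i.2]
    calc ∑ q ∈ S, C q • α q.1 q.2
        = ∑ q ∈ S, G q • α q.1 q.2
          + ∑ q ∈ S, ∑ p ∈ t, (if p.1 = q.1 ∧ q.2 ∈ Δ q.1 then L q.1 q.2 p.2 * G p else 0) • α q.1 q.2 := by
          rw [← Finset.sum_add_distrib]
          apply Finset.sum_congr rfl
          intro q _
          rw [hC]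
          simp only [add_smul, Finset.sum_smul]
      _ = ∑ q ∈ t, G q • α q.1 q.2
          + ∑ p ∈ t, ∑ j ∈ Δ p.1, (L p.1 j p.2 * G p) • α p.1 j := by
          rw [Finset.sum_comm]
          congr 1
          · symm
            apply Finset.sum_subset htS
            intro q _ hq
            simp [hG, hq]
          · exact Finset.sum_congr rfl hinner
      _ = ∑ p ∈ t, G p • (α p.1 p.2 + ∑ j ∈ Δ p.1, L p.1 j p.2 • α p.1 j) := by
          rw [← Finset.sum_add_distrib]
          apply Finset.sum_congr rfl
          intro p _
          rw [smul_add, Finset.smul_sum]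
          congr 1
          apply Finset.sum_congr rfl
          intro j _
          rw [mul_comm, mul_smul]
      _ = 0 := hg'
  -- apply (δ+1)h₂-wise independence
  have hzero : ∀ q ∈ S, C q = 0 := by
    have hli := hα S hScard
    rw [Fintype.linearIndependent_iff] at hli
    have := hli (fun q => C q) (by
      rw [Finset.sum_coe_sort S (fun q => C q • α q.1 q.2)]; exact hsum)
    intro q hq
    exact this ⟨q, hq⟩
  intro i
  have hCi := hzero i (htS i.2)
  rw [hC] at hCi
  simp only [hG] at hCi
  have : ∑ p ∈ t, (if p.1 = (i : Fin t2 × Fin n2).1 ∧ (i : Fin t2 × Fin n2).2 ∈ Δ (i : Fin t2 × Fin n2).1 then L (i : Fin t2 × Fin n2).1 (i : Fin t2 × Fin n2).2 p.2 * G p else 0) = 0 := by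
    apply Finset.sum_eq_zero
    intro p _
    have : (i : Fin t2 × Fin n2).2 ∉ Δ (i : Fin t2 × Fin n2).1 := ht i i.2
    simp [this]
  simp only [hG] at this
  rw [this, add_zero] at hCi
  simpa [i.2] using hCi
end

section
/- Fix integers n_2, δ, and a prime power q with primitive element structure as follows: let α_1,...,α_{n_2} be distinct elements of F_q and λ_1,...,λ_{t_2} elements of F_q^* in distinct cosets of a subgroup G ≤ F_q^* containing all α_i. For any two groups l' ≠ l'' and any choice of δ+1 indices j'_1,...,j'_{δ+1} in group l' and δ+1 indices j''_1,...,j''_{δ+1} in group l'', the (2δ+2)×(2δ+2) matrix consisting of: the δ Vandermonde rows (α_{j'_i}^m)_{m=1..δ} on the first block and zeros on the second, the δ Vandermonde rows on the second block and zeros on the first, the row (λ_{l'},...,λ_{l'}, λ_{l''},...,λ_{l''}), and the row (α_{j'_i}^{δ+1}, ..., α_{j''_i}^{δ+1}), is invertible. -/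
/-!
A vector `v` in the left kernel of the matrix yields two polynomials of degree at most `δ + 1`,
`P = v_{2δ} λ + ∑_{m<δ} v_m X^(m+1) + b X^(δ+1)` and
`Q = v_{2δ} λ' + ∑_{m<δ} v_{δ+m} X^(m+1) + b X^(δ+1)` with `b = v_{2δ+1}`,
vanishing at the `δ + 1` points `x i`, resp. `y i`. Hence `P = b ∏ (X - x i)` and
`Q = b ∏ (X - y i)`. If `b = 0` then `P = Q = 0`, so `v = 0`. Otherwise comparing constant terms
gives `v_{2δ} λ = ± b ∏ x i` and `v_{2δ} λ' = ± b ∏ y i`, so `λ⁻¹ λ' = (∏ x i)⁻¹ ∏ y i ∈ G`.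
-/

open Matrix Polynomial

namespace Polynomial

variable {F : Type*} [Field F]

theorem eq_C_coeff_mul_prod_X_sub_C {ι : Type*} [Fintype ι] {z : ι → F}
    (hz : Function.Injective z) {P : F[X]} (hdeg : P.natDegree ≤ Fintype.card ι)
    (hroot : ∀ i, P.eval (z i) = 0) :
    P = C (P.coeff (Fintype.card ι)) * ∏ i, (X - C (z i)) := by
  set Q : F[X] := ∏ i, (X - C (z i))
  have hQ : Q.Monic := monic_prod_of_monic _ _ fun i _ => monic_X_sub_C (z i)
  have hQdeg : Q.natDegree = Fintype.card ι := by
    simp [Q, natDegree_prod_of_monic _ _ fun i _ => monic_X_sub_C (z i)]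
  refine eq_of_degree_sub_lt_of_eval_index_eq Finset.univ hz.injOn ?_ fun i _ => ?_
  · rw [Finset.card_univ, degree_lt_iff_coeff_zero]
    intro m hm
    rcases hm.eq_or_lt with rfl | hlt
    · rw [coeff_sub, coeff_C_mul, ← hQdeg, hQ.coeff_natDegree, mul_one, sub_self]
    · rw [coeff_sub, coeff_C_mul, coeff_eq_zero_of_natDegree_lt (hdeg.trans_lt hlt),
        coeff_eq_zero_of_natDegree_lt (p := Q) (by omega), mul_zero, sub_zero]
  · simp [hroot i, Q, eval_prod, Finset.prod_eq_zero (Finset.mem_univ i)]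

theorem coeff_zero_eq_mul_prod_of_eval_eq_zero {ι : Type*} [Fintype ι] {z : ι → F}
    (hz : Function.Injective z) {P : F[X]} (hdeg : P.natDegree ≤ Fintype.card ι)
    (hroot : ∀ i, P.eval (z i) = 0) :
    P.coeff 0 = (-1) ^ Fintype.card ι * P.coeff (Fintype.card ι) * ∏ i, z i := by
  conv_lhs => rw [coeff_zero_eq_eval_zero, eq_C_coeff_mul_prod_X_sub_C hz hdeg hroot]
  simp [eval_prod, Finset.prod_neg]
  ring

theorem coeff_sum_smul_of_forall_ne {R ι : Type*} [Semiring R] [Fintype ι] (v : ι → R)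
    (r : ι → R[X]) {i : ι} {k : ℕ} (h : ∀ j ≠ i, (r j).coeff k = 0) :
    (∑ j, v j • r j).coeff k = v i * (r i).coeff k := by
  rw [finsetSum_coeff, Finset.sum_eq_single i (fun j _ hj => by rw [coeff_smul, h j hj, smul_zero])
    (by simp), coeff_smul, smul_eq_mul]

end Polynomial

section TwoGroup

variable {F : Type*} [Field F] (δ s : ℕ) (c : F)

/-- Row `p` of the matrix on a column block, as a polynomial in the column's point; `s` is the
first Vandermonde row of that block (`0` or `δ`). -/
noncomputable def blockRowPoly (p : ℕ) : F[X] :=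
  if p < 2 * δ then (if s ≤ p ∧ p < s + δ then X ^ (p - s + 1) else 0)
  else if p = 2 * δ then C c else X ^ (δ + 1)

theorem coeff_blockRowPoly (p k : ℕ) :
    (blockRowPoly δ s c p).coeff k =
      if p < 2 * δ then (if s ≤ p ∧ p < s + δ ∧ k = p - s + 1 then 1 else 0)
      else if p = 2 * δ then (if k = 0 then c else 0) else (if k = δ + 1 then 1 else 0) := by
  unfold blockRowPoly
  split_ifs <;> simp_all [coeff_X_pow, coeff_C]

theorem natDegree_blockRowPoly_le (p : ℕ) : (blockRowPoly δ s c p).natDegree ≤ δ + 1 := by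
  unfold blockRowPoly
  split_ifs <;> simp
  omega

variable {δ s c} {v : Fin (2 * δ + 2) → F}

theorem coeff_zero_sum_smul_blockRowPoly :
    (∑ p, v p • blockRowPoly δ s c p).coeff 0 = v ⟨2 * δ, by omega⟩ * c := by
  rw [coeff_sum_smul_of_forall_ne (i := ⟨2 * δ, by omega⟩)]
  · simp [coeff_blockRowPoly]
  · intro j hj
    have := Fin.val_ne_of_ne hj
    rw [coeff_blockRowPoly]
    split_ifs <;> simp_all

theorem coeff_succ_sum_smul_blockRowPoly {p : Fin (2 * δ + 2)} (hsp : s ≤ p)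
    (hps : (p : ℕ) < s + δ) (hp : (p : ℕ) < 2 * δ) :
    (∑ q, v q • blockRowPoly δ s c q).coeff (p - s + 1) = v p := by
  rw [coeff_sum_smul_of_forall_ne (i := p)]
  · simp [coeff_blockRowPoly, hsp, hps, hp]
  · intro j hj
    have := Fin.val_ne_of_ne hj
    rw [coeff_blockRowPoly]
    split_ifs <;> simp_all <;> omega

theorem coeff_top_sum_smul_blockRowPoly :
    (∑ p, v p • blockRowPoly δ s c p).coeff (δ + 1) = v ⟨2 * δ + 1, by omega⟩ := by
  rw [coeff_sum_smul_of_forall_ne (i := ⟨2 * δ + 1, by omega⟩)]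
  · simp [coeff_blockRowPoly]
  · intro j hj
    have := Fin.val_ne_of_ne hj
    rw [coeff_blockRowPoly]
    split_ifs <;> simp_all <;> omega

theorem natDegree_sum_smul_blockRowPoly_le :
    (∑ p, v p • blockRowPoly δ s c p).natDegree ≤ δ + 1 :=
  natDegree_sum_le_of_forall_le _ _ fun p _ =>
    (natDegree_smul_le _ _).trans (natDegree_blockRowPoly_le δ s c p)

theorem eq_zero_of_sum_smul_blockRowPoly_eq_zero {c' : F} (hc : c ≠ 0)
    (h₁ : ∑ p, v p • blockRowPoly δ 0 c p = 0) (h₂ : ∑ p, v p • blockRowPoly δ δ c' p = 0) :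
    v = 0 := by
  funext p
  rcases lt_or_ge (p : ℕ) δ with hp | hp
  · simpa [h₁] using (coeff_succ_sum_smul_blockRowPoly (Nat.zero_le _) (by omega) (by omega)
      (s := 0) (c := c) (v := v) (p := p)).symm
  rcases lt_or_ge (p : ℕ) (2 * δ) with hp' | hp'
  · simpa [h₂] using (coeff_succ_sum_smul_blockRowPoly hp (by omega) hp'
      (c := c') (v := v)).symm
  rcases hp'.eq_or_lt with hp'' | hp''
  · have := (coeff_zero_sum_smul_blockRowPoly (s := 0) (c := c) (v := v)).symm
    rw [h₁, coeff_zero, mul_eq_zero, or_iff_left hc] at this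
    simpa [Fin.ext_iff, hp''] using this
  · rw [show p = ⟨2 * δ + 1, by omega⟩ from Fin.ext (by have := p.isLt; dsimp only; omega)]
    simpa [h₁] using (coeff_top_sum_smul_blockRowPoly (s := 0) (c := c) (v := v)).symm

variable (δ) in
noncomputable def twoGroupMatrix (x y : Fin (δ + 1) → F) (c c' : F) :
    Matrix (Fin (2 * δ + 2)) (Fin (2 * δ + 2)) F :=
  of fun p q => if hq : (q : ℕ) < δ + 1 then (blockRowPoly δ 0 c p).eval (x ⟨q, hq⟩)
    else (blockRowPoly δ δ c' p).eval (y ⟨q - (δ + 1), by omega⟩)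

theorem eval_sum_smul_blockRowPoly_eq_zero_of_vecMul_eq_zero {x y : Fin (δ + 1) → F} {c' : F}
    (h : v ᵥ* twoGroupMatrix δ x y c c' = 0) :
    (∀ i, (∑ p, v p • blockRowPoly δ 0 c p).eval (x i) = 0) ∧
      ∀ i, (∑ p, v p • blockRowPoly δ δ c' p).eval (y i) = 0 := by
  constructor <;> intro i
  · simpa [vecMul, dotProduct, twoGroupMatrix, eval_finsetSum, mul_comm, i.is_le]
      using congrFun h ⟨i, by omega⟩
  · have hi : ¬δ + 1 + (i : ℕ) ≤ δ := by omega
    simpa [vecMul, dotProduct, twoGroupMatrix, eval_finsetSum, mul_comm, hi]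
      using congrFun h ⟨δ + 1 + i, by omega⟩

end TwoGroup

theorem Subgroup.inv_mul_mem_of_mul_eq_mul {F : Type*} [Field F] {G : Subgroup Fˣ} {a b : F}
    {l l' u u' : Fˣ} (hb : b ≠ 0) (h : a * l = b * u) (h' : a * l' = b * u') (hu : u ∈ G)
    (hu' : u' ∈ G) : l⁻¹ * l' ∈ G := by
  have ha : a ≠ 0 := left_ne_zero_of_mul (h ▸ mul_ne_zero hb u.ne_zero)
  have : l⁻¹ * l' = u⁻¹ * u' := by
    refine Units.ext ?_
    push_cast
    field_simp
    refine mul_left_cancel₀ (mul_ne_zero ha hb) ?_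
    linear_combination b * u * h' - b * u' * h
  rw [this]
  exact G.mul_mem (G.inv_mem hu) hu'

/-- **Invertibility of the two-group Vandermonde/coset matrix.** Let `G ≤ F_qˣ`, let
`x 1, …, x (δ+1)` and `y 1, …, y (δ+1)` be (within each list distinct) elements of `G`
(the selected `α`'s of the two local groups), and let `λ, λ'` lie in distinct cosets of
`G`. Then the `(2δ+2) × (2δ+2)` matrix consisting of the `δ` Vandermonde rows on the
first block (zero on the second), the `δ` Vandermonde rows on the second block (zero on
the first), the row `(λ,…,λ,λ',…,λ')` and the row of `(δ+1)`-st powers, is invertible. -/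
theorem two_group_vandermonde_coset_invertible
    (F : Type*) [Field F] (G : Subgroup Fˣ) (δ : ℕ)
    (x y : Fin (δ+1) → Fˣ) (hx : Function.Injective x) (hy : Function.Injective y)
    (hxG : ∀ i, x i ∈ G) (hyG : ∀ i, y i ∈ G)
    (lam lam' : Fˣ) (hcoset : lam⁻¹ * lam' ∉ G) :
    IsUnit (Matrix.of fun p q : Fin (2*δ+2) =>
      if hq : (q : ℕ) < δ + 1 then
        (if (p : ℕ) < δ then ((x ⟨q, hq⟩ : Fˣ) : F) ^ ((p : ℕ) + 1)
         else if (p : ℕ) < 2*δ then 0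
         else if (p : ℕ) = 2*δ then ((lam : Fˣ) : F)
         else ((x ⟨q, hq⟩ : Fˣ) : F) ^ (δ + 1))
      else
        (if (p : ℕ) < δ then 0
         else if (p : ℕ) < 2*δ then
           ((y ⟨(q : ℕ) - (δ+1), by have := q.isLt; omega⟩ : Fˣ) : F) ^ ((p : ℕ) - δ + 1)
         else if (p : ℕ) = 2*δ then ((lam' : Fˣ) : F)
         else ((y ⟨(q : ℕ) - (δ+1), by have := q.isLt; omega⟩ : Fˣ) : F) ^ (δ + 1))).det := by
  suffices h : IsUnit (twoGroupMatrix δ (fun i => (x i : F)) (fun i => (y i : F)) lam lam').det by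
    convert h using 3
    ext p q
    simp only [twoGroupMatrix, blockRowPoly, of_apply]
    split_ifs <;> simp_all <;> omega
  rw [isUnit_iff_ne_zero, Ne, ← exists_vecMul_eq_zero_iff]
  rintro ⟨v, hv0, hvM⟩
  obtain ⟨hx₀, hy₀⟩ := eval_sum_smul_blockRowPoly_eq_zero_of_vecMul_eq_zero hvM
  have hxinj : Function.Injective fun i => (x i : F) := Units.val_injective.comp hx
  have hyinj : Function.Injective fun i => (y i : F) := Units.val_injective.comp hy
  have hdeg₁ := natDegree_sum_smul_blockRowPoly_le (v := v) (s := 0) (c := (lam : F))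
  have hdeg₂ := natDegree_sum_smul_blockRowPoly_le (v := v) (s := δ) (c := (lam' : F))
  rw [← Fintype.card_fin (δ + 1)] at hdeg₁ hdeg₂
  by_cases hb : v ⟨2 * δ + 1, by omega⟩ = 0
  · have hP := eq_C_coeff_mul_prod_X_sub_C hxinj hdeg₁ hx₀
    have hQ := eq_C_coeff_mul_prod_X_sub_C hyinj hdeg₂ hy₀
    rw [Fintype.card_fin, coeff_top_sum_smul_blockRowPoly, hb, C_0, zero_mul] at hP hQ
    exact hv0 (eq_zero_of_sum_smul_blockRowPoly_eq_zero lam.ne_zero hP hQ)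
  · have h₁ := coeff_zero_eq_mul_prod_of_eval_eq_zero hxinj hdeg₁ hx₀
    have h₂ := coeff_zero_eq_mul_prod_of_eval_eq_zero hyinj hdeg₂ hy₀
    rw [Fintype.card_fin, coeff_top_sum_smul_blockRowPoly, coeff_zero_sum_smul_blockRowPoly,
      ← Units.coe_prod] at h₁ h₂
    exact hcoset (Subgroup.inv_mul_mem_of_mul_eq_mul (mul_ne_zero (by simp) hb) h₁ h₂
      (prod_mem fun i _ => hxG i) (prod_mem fun i _ => hyG i))
end

section
/- A [k, r_1, r_2, h_1, h_2, δ] hierarchical data-local maximally recoverable code has minimum distance exactly d = h_1 + h_2 + δ + 1. -/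
/-!
Lower bound. Let `c ≠ 0` be a codeword whose support `S` has at most `h₁ + h₂ + δ` elements.
In each middle group `A i` discard `h₂ + t₂δ` coordinates, at least `δ` from every local group,
chosen so that they cover `min (h₂ + δ) |S ∩ A i|` points of `S`. The kept coordinates together
with the `h₁` global parities form a pattern `E` to which the MR property applies, and `E` meets
`S` in at most `h₁` points. As `C|_E` has dimension `k`, `c|_E` is a nonzero codeword of
`C|_E` of weight at most `h₁`, contradicting its minimum distance `h₁ + 1`.

Upper bound. Let `U` consist of the global parities, the `h₂` mid-level parities of one middle
group `A i₀` and `δ + 1` coordinates of one local group `B i₀ s₀`. The locality constraints bound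
the rank of `C` off `U` by `(t₁ - 1) r₁ + (t₂ - 1) r₂ + (r₂ - 1) < k`, so some nonzero codeword
is supported in `U`.
-/

open Module

/-- The linear map restricting a word of length `n` to the coordinates in `E`
(puncturing on the complement of `E`). -/
def punctureTo (F : Type*) [Field F] {n : ℕ} (E : Finset (Fin n)) :
    (Fin n → F) →ₗ[F] (E → F) :=
  LinearMap.funLeft F F (fun j => (j : Fin n))

/-- A `[k, r₁, r₂, h₁, h₂, δ]` hierarchical data-local maximally recoverable code, with
`t₁ = k/r₁` middle groups `A i` of size `n₁ = r₁ + h₂ + t₂δ` and `t₂ = r₁/r₂` local groups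
`B i s ⊆ A i` of size `n₂ = r₂ + δ` each, length `n = k + h₁ + t₁(h₂ + t₂δ)`:
the code has dimension `k`, each local group carries `δ` local parities
(`dim C|_{B i s} ≤ r₂`), each middle group carries `h₂` further mid-level parities
(`dim C|_{A i} ≤ r₁`), and for every `E ⊆ [n]` of size `k + h₁` meeting each local group
in at most `r₂` coordinates and each middle group in exactly `r₁` coordinates, the
punctured code `C|_E` is a `[k+h₁, k, h₁+1]` MDS code. -/
structure IsHDLMRC (F : Type*) [Field F] [DecidableEq F]
    (k r1 r2 h1 h2 δ t1 t2 n : ℕ) where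
  C : Submodule F (Fin n → F)
  A : Fin t1 → Finset (Fin n)
  B : Fin t1 → Fin t2 → Finset (Fin n)
  hk : k = t1 * r1
  hr1 : r1 = t2 * r2
  hn : n = k + h1 + t1 * (h2 + t2 * δ)
  hA_card : ∀ i, (A i).card = r1 + h2 + t2 * δ
  hA_disj : ∀ i j, i ≠ j → Disjoint (A i) (A j)
  hB_sub : ∀ i s, B i s ⊆ A i
  hB_card : ∀ i s, (B i s).card = r2 + δ
  hB_disj : ∀ i s s', s ≠ s' → Disjoint (B i s) (B i s')
  hdim : finrank F C = k
  hloc : ∀ i s, finrank F (C.map (punctureTo F (B i s))) ≤ r2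
  hmid : ∀ i, finrank F (C.map (punctureTo F (A i))) ≤ r1
  hMR : ∀ E : Finset (Fin n), E.card = k + h1 →
    (∀ i s, (E ∩ B i s).card ≤ r2) → (∀ i, (E ∩ A i).card = r1) →
    finrank F (C.map (punctureTo F E)) = k ∧
      ∀ x ∈ C.map (punctureTo F E), x ≠ 0 → h1 + 1 ≤ hammingNorm x

open Finset Function

section Puncture

variable {F : Type*} [Field F] {n : ℕ} (C : Submodule F (Fin n → F))

theorem mem_ker_punctureTo_domRestrict {E : Finset (Fin n)} {x : C} :
    x ∈ LinearMap.ker ((punctureTo F E).domRestrict C) ↔ ∀ j ∈ E, (x : Fin n → F) j = 0 := by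
  simp [punctureTo, funext_iff]

theorem finrank_map_punctureTo_add_finrank_ker (E : Finset (Fin n)) :
    finrank F (C.map (punctureTo F E)) +
      finrank F (LinearMap.ker ((punctureTo F E).domRestrict C)) = finrank F C := by
  rw [← LinearMap.range_domRestrict, LinearMap.finrank_range_add_finrank_ker]

theorem ker_punctureTo_union_domRestrict (E₁ E₂ : Finset (Fin n)) :
    LinearMap.ker ((punctureTo F (E₁ ∪ E₂)).domRestrict C) =
      LinearMap.ker ((punctureTo F E₁).domRestrict C) ⊓
        LinearMap.ker ((punctureTo F E₂).domRestrict C) := by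
  ext x
  simp only [Submodule.mem_inf, mem_ker_punctureTo_domRestrict, mem_union, or_imp, forall_and]

theorem finrank_map_punctureTo_le_card (E : Finset (Fin n)) :
    finrank F (C.map (punctureTo F E)) ≤ #E :=
  (Submodule.finrank_le _).trans_eq (by simp)

theorem finrank_map_punctureTo_mono {E E' : Finset (Fin n)} (h : E ⊆ E') :
    finrank F (C.map (punctureTo F E)) ≤ finrank F (C.map (punctureTo F E')) := by
  have hker : LinearMap.ker ((punctureTo F E').domRestrict C) ≤
      LinearMap.ker ((punctureTo F E).domRestrict C) := fun x hx =>
    mem_ker_punctureTo_domRestrict C |>.2 fun j hj =>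
      (mem_ker_punctureTo_domRestrict C).1 hx j (h hj)
  have := Submodule.finrank_mono hker
  have := finrank_map_punctureTo_add_finrank_ker C E
  have := finrank_map_punctureTo_add_finrank_ker C E'
  omega

theorem finrank_map_punctureTo_union_le (E₁ E₂ : Finset (Fin n)) :
    finrank F (C.map (punctureTo F (E₁ ∪ E₂))) ≤
      finrank F (C.map (punctureTo F E₁)) + finrank F (C.map (punctureTo F E₂)) := by
  have h₁ := finrank_map_punctureTo_add_finrank_ker C E₁
  have h₂ := finrank_map_punctureTo_add_finrank_ker C E₂
  have h₁₂ := finrank_map_punctureTo_add_finrank_ker C (E₁ ∪ E₂)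
  rw [ker_punctureTo_union_domRestrict] at h₁₂
  have := Submodule.finrank_sup_add_finrank_inf_eq
    (LinearMap.ker ((punctureTo F E₁).domRestrict C))
    (LinearMap.ker ((punctureTo F E₂).domRestrict C))
  have := Submodule.finrank_le
    (LinearMap.ker ((punctureTo F E₁).domRestrict C) ⊔
      LinearMap.ker ((punctureTo F E₂).domRestrict C))
  omega

theorem finrank_map_punctureTo_biUnion_le {ι : Type*} [DecidableEq ι] (s : Finset ι)
    (P : ι → Finset (Fin n)) :
    finrank F (C.map (punctureTo F (s.biUnion P))) ≤
      ∑ i ∈ s, finrank F (C.map (punctureTo F (P i))) := by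
  induction s using Finset.induction_on with
  | empty => exact (finrank_map_punctureTo_le_card C ∅).trans_eq (by simp)
  | insert a s ha ih =>
    rw [biUnion_insert, sum_insert ha]
    exact (finrank_map_punctureTo_union_le C _ _).trans (by omega)

theorem punctureTo_ne_zero_of_finrank_map_eq {E : Finset (Fin n)}
    (hE : finrank F (C.map (punctureTo F E)) = finrank F C) {c : Fin n → F} (hc : c ∈ C)
    (hc₀ : c ≠ 0) : punctureTo F E c ≠ 0 := by
  have hker : LinearMap.ker ((punctureTo F E).domRestrict C) = ⊥ := by
    have := finrank_map_punctureTo_add_finrank_ker C E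
    exact Submodule.finrank_eq_zero.mp (by omega)
  intro h
  have : (⟨c, hc⟩ : C) ∈ LinearMap.ker ((punctureTo F E).domRestrict C) := h
  rw [hker, Submodule.mem_bot] at this
  exact hc₀ (congrArg Subtype.val this)

theorem exists_mem_ne_zero_forall_eq_zero_of_finrank_map_lt {T : Finset (Fin n)}
    (hT : finrank F (C.map (punctureTo F T)) < finrank F C) :
    ∃ c ∈ C, c ≠ 0 ∧ ∀ j ∈ T, c j = 0 := by
  have hker : LinearMap.ker ((punctureTo F T).domRestrict C) ≠ ⊥ := by
    intro h
    have := finrank_map_punctureTo_add_finrank_ker C T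
    rw [h, finrank_bot] at this
    omega
  obtain ⟨x, hx, hx₀⟩ := (Submodule.ne_bot_iff _).mp hker
  exact ⟨x, x.2, fun h => hx₀ (Subtype.ext h), (mem_ker_punctureTo_domRestrict C).1 hx⟩

end Puncture

section Weight

variable {F : Type*} [Field F] [DecidableEq F]

theorem hammingNorm_punctureTo {n : ℕ} (E : Finset (Fin n)) (c : Fin n → F) :
    hammingNorm (punctureTo F E c) = #(E ∩ ({j | c j ≠ 0} : Finset (Fin n))) := by
  refine card_bij (fun a _ => a.1) ?_ (fun a _ b _ h => Subtype.ext h) ?_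
  · intro a ha
    simp only [mem_filter, mem_univ, true_and] at ha
    exact mem_inter.2 ⟨a.2, mem_filter.2 ⟨mem_univ _, ha⟩⟩
  · intro b hb
    simp only [mem_inter, mem_filter, mem_univ, true_and] at hb
    exact ⟨⟨b, hb.1⟩, mem_filter.2 ⟨mem_univ _, hb.2⟩, rfl⟩

theorem hammingNorm_le_card_of_forall_notMem_eq_zero {ι : Type*} [Fintype ι] {c : ι → F}
    {U : Finset ι} (hc : ∀ j ∉ U, c j = 0) : hammingNorm c ≤ #U :=
  card_le_card fun j hj => by_contra fun hjU => (mem_filter.1 hj).2 (hc j hjU)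

end Weight

namespace Finset

variable {α ι : Type*} [DecidableEq α]

theorem min_sum_le_sum_min (s : Finset ι) (f : ι → ℕ) (c : ℕ) :
    min c (∑ i ∈ s, f i) ≤ ∑ i ∈ s, min c (f i) := by
  induction s using Finset.cons_induction with
  | empty => simp
  | cons a s ha ih => rw [sum_cons, sum_cons]; omega

theorem card_biUnion_univ_inter [Fintype ι] {P : ι → Finset α} (hP : Pairwise (Disjoint on P))
    (S : Finset α) : #(univ.biUnion P ∩ S) = ∑ i, #(P i ∩ S) := by
  rw [biUnion_inter, card_biUnion]
  exact fun i _ j _ hij => (hP hij).mono inter_subset_left inter_subset_left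

theorem card_biUnion_univ [Fintype ι] {P : ι → Finset α} (hP : Pairwise (Disjoint on P)) :
    #(univ.biUnion P) = ∑ i, #(P i) :=
  card_biUnion fun _ _ _ _ hij => hP hij

theorem exists_subset_card_eq_min_le_card_inter (S : Finset α) {Y : Finset α} {m : ℕ}
    (hm : m ≤ #Y) : ∃ Z ⊆ Y, #Z = m ∧ min m #(Y ∩ S) ≤ #(Z ∩ S) := by
  obtain ⟨Z₀, hZ₀, hZ₀_card⟩ := exists_subset_card_eq (min_le_right m #(Y ∩ S))
  obtain ⟨Z, hZ₀Z, hZY, hZ_card⟩ := exists_subsuperset_card_eq (hZ₀.trans inter_subset_left)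
    (hZ₀_card.trans_le (min_le_left _ _)) hm
  exact ⟨Z, hZY, hZ_card,
    hZ₀_card ▸ card_le_card (subset_inter hZ₀Z (hZ₀.trans inter_subset_right))⟩

theorem min_card_biUnion_univ_inter_le [Fintype ι] {P Z : ι → Finset α}
    (hP : Pairwise (Disjoint on P)) (hZ : Pairwise (Disjoint on Z)) {c : ℕ} {S : Finset α}
    (h : ∀ i, min c #(P i ∩ S) ≤ #(Z i ∩ S)) :
    min c #(univ.biUnion P ∩ S) ≤ #(univ.biUnion Z ∩ S) := by
  rw [card_biUnion_univ_inter hP, card_biUnion_univ_inter hZ]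
  exact (min_sum_le_sum_min _ _ _).trans (sum_le_sum fun i _ => h i)

theorem exists_subset_le_card_inter_of_pairwise_disjoint [Fintype ι] {A : Finset α}
    {B : ι → Finset α} {h δ : ℕ} (hB_sub : ∀ s, B s ⊆ A) (hB_disj : Pairwise (Disjoint on B))
    (hB_card : ∀ s, δ ≤ #(B s)) (hA : #(A \ univ.biUnion B) = h) (S : Finset α) :
    ∃ Z ⊆ A, #Z = h + Fintype.card ι * δ ∧ (∀ s, δ ≤ #(Z ∩ B s)) ∧
      min (h + δ) #(A ∩ S) ≤ #(Z ∩ S) := by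
  -- `δ` points of each `B s`, then `h` further points of `A`, each time taking in as much of `S`
  -- as possible
  choose D hDB hD_card hDS using fun s => exists_subset_card_eq_min_le_card_inter S (hB_card s)
  have hD_disj : Pairwise (Disjoint on D) := fun s s' hss' =>
    (hB_disj hss').mono (hDB s) (hDB s')
  have hUB : univ.biUnion B ⊆ A := biUnion_subset.2 fun s _ => hB_sub s
  have hZB : univ.biUnion D ⊆ univ.biUnion B := biUnion_mono fun s _ => hDB s
  have hZB_card : #(univ.biUnion D) = Fintype.card ι * δ := by
    simp [card_biUnion_univ hD_disj, hD_card]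
  have hroom : h ≤ #(A \ univ.biUnion D) := by
    rw [card_sdiff_of_subset (hZB.trans hUB), ← hA, card_sdiff_of_subset hUB]
    have := card_le_card hZB
    have := card_le_card hUB
    omega
  obtain ⟨Zp, hZp, hZp_card, hZpS⟩ := exists_subset_card_eq_min_le_card_inter S hroom
  have hZBZp : Disjoint (univ.biUnion D) Zp := disjoint_sdiff.mono_right hZp
  refine ⟨univ.biUnion D ∪ Zp, union_subset (hZB.trans hUB) (hZp.trans sdiff_subset), ?_,
    fun s => ?_, ?_⟩
  · rw [card_union_of_disjoint hZBZp, hZB_card, hZp_card, add_comm]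
  · have hD : D s ⊆ (univ.biUnion D ∪ Zp) ∩ B s :=
      subset_inter (subset_union_left.trans' (subset_biUnion_of_mem D (mem_univ s))) (hDB s)
    exact (hD_card s).symm.le.trans (card_le_card hD)
  · have hx := min_card_biUnion_univ_inter_le hB_disj hD_disj hDS
    have hAS : #(A ∩ S) ≤ h + #(univ.biUnion B ∩ S) := by
      have hAS_sub : A ∩ S ⊆ (A \ univ.biUnion B) ∪ (univ.biUnion B ∩ S) := fun j hj => by
        by_cases hjB : j ∈ univ.biUnion B <;> simp_all
      exact hA ▸ (card_le_card hAS_sub).trans (card_union_le _ _)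
    have hsplit : #((A \ univ.biUnion D) ∩ S) + #(univ.biUnion D ∩ S) = #(A ∩ S) := by
      rw [sdiff_inter_right_comm, ← card_sdiff_add_card_inter (A ∩ S) (univ.biUnion D),
        inter_right_comm, inter_eq_right.2 (hZB.trans hUB)]
    rw [union_inter_distrib_right,
      card_union_of_disjoint (hZBZp.mono inter_subset_left inter_subset_left)]
    omega

end Finset

namespace IsHDLMRC

variable {F : Type*} [Field F] [DecidableEq F] {k r1 r2 h1 h2 δ t1 t2 n : ℕ}
  (X : IsHDLMRC F k r1 r2 h1 h2 δ t1 t2 n)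

theorem pairwise_disjoint_A : Pairwise (Disjoint on X.A) := fun i j h => X.hA_disj i j h

theorem pairwise_disjoint_B (i : Fin t1) : Pairwise (Disjoint on X.B i) := fun s s' h =>
  X.hB_disj i s s' h

theorem card_compl_biUnion_A : #(univ.biUnion X.A)ᶜ = h1 := by
  have : t1 * (r1 + h2 + t2 * δ) = k + t1 * (h2 + t2 * δ) := by rw [X.hk]; ring
  simp only [card_compl, Fintype.card_fin, card_biUnion_univ X.pairwise_disjoint_A, X.hA_card,
    sum_const, card_univ, smul_eq_mul]
  have := X.hn
  omega

theorem card_sdiff_biUnion_B (i : Fin t1) : #(X.A i \ univ.biUnion (X.B i)) = h2 := by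
  have : t2 * (r2 + δ) = r1 + t2 * δ := by rw [X.hr1]; ring
  rw [card_sdiff_of_subset (biUnion_subset.2 fun s _ => X.hB_sub i s), X.hA_card,
    card_biUnion_univ (X.pairwise_disjoint_B i)]
  simp only [X.hB_card, sum_const, card_univ, Fintype.card_fin, smul_eq_mul]
  omega

theorem exists_admissible_card_inter_le {S : Finset (Fin n)} (hS : #S ≤ h1 + h2 + δ) :
    ∃ E : Finset (Fin n), #E = k + h1 ∧ (∀ i s, #(E ∩ X.B i s) ≤ r2) ∧
      (∀ i, #(E ∩ X.A i) = r1) ∧ #(E ∩ S) ≤ h1 := by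
  choose Z hZA hZ_card hZB hZS using fun i =>
    exists_subset_le_card_inter_of_pairwise_disjoint (X.hB_sub i) (X.pairwise_disjoint_B i)
      (fun s => (X.hB_card i s).symm ▸ Nat.le_add_left δ r2) (X.card_sdiff_biUnion_B i) S
  simp only [Fintype.card_fin] at hZ_card
  have hZ_disj : Pairwise (Disjoint on Z) := fun i j hij =>
    (X.pairwise_disjoint_A hij).mono (hZA i) (hZA j)
  have hEA : ∀ i, (univ.biUnion Z)ᶜ ∩ X.A i = X.A i \ Z i := by
    intro i
    ext j
    simp only [mem_inter, mem_compl, mem_biUnion, mem_univ, true_and, mem_sdiff, not_exists]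
    refine ⟨fun h => ⟨h.2, h.1 i⟩, fun h => ⟨fun i' hi' => ?_, h.1⟩⟩
    obtain rfl | hii' := eq_or_ne i i'
    · exact h.2 hi'
    · exact disjoint_left.1 (X.pairwise_disjoint_A hii') h.1 (hZA i' hi')
  refine ⟨(univ.biUnion Z)ᶜ, ?_, fun i s => ?_, fun i => ?_, ?_⟩
  · simp only [card_compl, Fintype.card_fin, card_biUnion_univ hZ_disj, hZ_card, sum_const,
      card_univ, smul_eq_mul, X.hn]
    omega
  · have hsub : (univ.biUnion Z)ᶜ ∩ X.B i s ⊆ X.B i s \ Z i := by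
      intro j hj
      have := (hEA i).subset (mem_inter.2 ⟨(mem_inter.1 hj).1, X.hB_sub i s (mem_inter.1 hj).2⟩)
      exact mem_sdiff.2 ⟨(mem_inter.1 hj).2, (mem_sdiff.1 this).2⟩
    calc #((univ.biUnion Z)ᶜ ∩ X.B i s) ≤ #(X.B i s \ Z i) := card_le_card hsub
      _ = r2 + δ - #(Z i ∩ X.B i s) := by rw [card_sdiff, X.hB_card]
      _ ≤ r2 := by have := hZB i s; omega
  · rw [hEA, card_sdiff_of_subset (hZA i), X.hA_card, hZ_card, X.hr1]
    omega
  · have hcov := min_card_biUnion_univ_inter_le X.pairwise_disjoint_A hZ_disj hZS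
    have hsplit := card_sdiff_add_card_inter S (univ.biUnion Z)
    have hout : #S ≤ #(univ.biUnion X.A ∩ S) + h1 := by
      have := X.card_compl_biUnion_A
      have hS_sub : S ⊆ (univ.biUnion X.A ∩ S) ∪ (univ.biUnion X.A)ᶜ := fun j hj => by
        by_cases hjA : j ∈ univ.biUnion X.A <;> simp [hj, hjA]
      have := (card_le_card hS_sub).trans
        (card_union_le (univ.biUnion X.A ∩ S) (univ.biUnion X.A)ᶜ)
      omega
    rw [sdiff_eq_inter_compl, inter_comm, inter_comm S] at hsplit
    omega

theorem le_hammingNorm {c : Fin n → F} (hc : c ∈ X.C) (hc₀ : c ≠ 0) :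
    h1 + h2 + δ + 1 ≤ hammingNorm c := by
  by_contra! hlt
  obtain ⟨E, hE_card, hEB, hEA, hES⟩ :=
    X.exists_admissible_card_inter_le (S := {j | c j ≠ 0}) (by unfold hammingNorm at hlt; omega)
  obtain ⟨hE_dim, hE_dist⟩ := X.hMR E hE_card hEB hEA
  have := hE_dist _ (Submodule.mem_map_of_mem hc)
    (punctureTo_ne_zero_of_finrank_map_eq X.C (hE_dim.trans X.hdim.symm) hc hc₀)
  rw [hammingNorm_punctureTo] at this
  omega

theorem exists_card_le_finrank_map_compl_lt (hk : 0 < k) :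
    ∃ U : Finset (Fin n), #U ≤ h1 + h2 + δ + 1 ∧
      finrank F (X.C.map (punctureTo F Uᶜ)) < k := by
  obtain ⟨ht1, ht2, hr2⟩ : 0 < t1 ∧ 0 < t2 ∧ 0 < r2 := by
    rw [X.hk, X.hr1] at hk
    simpa [Nat.pos_iff_ne_zero, not_or] using hk
  set i₀ : Fin t1 := ⟨0, ht1⟩
  set s₀ : Fin t2 := ⟨0, ht2⟩
  obtain ⟨D, hD, hD_card⟩ :=
    exists_subset_card_eq (s := X.B i₀ s₀) (n := δ + 1) (by rw [X.hB_card]; omega)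
  refine ⟨(univ.biUnion X.A)ᶜ ∪ (X.A i₀ \ univ.biUnion (X.B i₀)) ∪ D, ?_, ?_⟩
  · have := card_union_le ((univ.biUnion X.A)ᶜ) (X.A i₀ \ univ.biUnion (X.B i₀))
    have := card_union_le ((univ.biUnion X.A)ᶜ ∪ (X.A i₀ \ univ.biUnion (X.B i₀))) D
    rw [X.card_compl_biUnion_A, X.card_sdiff_biUnion_B] at *
    omega
  have hT : ((univ.biUnion X.A)ᶜ ∪ (X.A i₀ \ univ.biUnion (X.B i₀)) ∪ D)ᶜ ⊆
      (univ.erase i₀).biUnion X.A ∪ (univ.erase s₀).biUnion (X.B i₀) ∪ (X.B i₀ s₀ \ D) := by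
    intro j hj
    simp only [compl_union, compl_compl, mem_inter, mem_compl, mem_sdiff, not_and, not_not,
      mem_biUnion, mem_univ, true_and] at hj
    obtain ⟨⟨⟨i, hi⟩, hjB⟩, hjD⟩ := hj
    simp only [mem_union, mem_biUnion, mem_erase, mem_univ, and_true, mem_sdiff]
    obtain rfl | hi₀ := eq_or_ne i i₀
    · obtain ⟨s, hs⟩ := hjB hi
      obtain rfl | hs₀ := eq_or_ne s s₀
      · exact Or.inr ⟨hs, hjD⟩
      · exact Or.inl (Or.inr ⟨s, hs₀, hs⟩)
    · exact Or.inl (Or.inl ⟨i, hi₀, hi⟩)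
  have hBD : #(X.B i₀ s₀ \ D) = r2 - 1 := by
    rw [card_sdiff_of_subset hD, X.hB_card, hD_card]; omega
  calc finrank F (X.C.map (punctureTo F _)) ≤ _ := finrank_map_punctureTo_mono X.C hT
    _ ≤ (t1 - 1) * r1 + (t2 - 1) * r2 + (r2 - 1) := by
      refine (finrank_map_punctureTo_union_le X.C _ _).trans (add_le_add
        ((finrank_map_punctureTo_union_le X.C _ _).trans (add_le_add ?_ ?_))
        ((finrank_map_punctureTo_le_card X.C _).trans hBD.le))
      · refine (finrank_map_punctureTo_biUnion_le X.C _ _).trans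
          ((sum_le_card_nsmul _ _ _ fun i _ => X.hmid i).trans_eq ?_)
        simp
      · refine (finrank_map_punctureTo_biUnion_le X.C _ _).trans
          ((sum_le_card_nsmul _ _ _ fun s _ => X.hloc i₀ s).trans_eq ?_)
        simp
    _ < k := by
      have h₁ : (t1 - 1) * r1 + r1 = k := by
        rw [X.hk, ← Nat.succ_mul, Nat.succ_eq_add_one, Nat.sub_add_cancel ht1]
      have h₂ : (t2 - 1) * r2 + r2 = r1 := by
        rw [X.hr1, ← Nat.succ_mul, Nat.succ_eq_add_one, Nat.sub_add_cancel ht2]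
      omega

theorem exists_hammingNorm_le (hk : 0 < k) :
    ∃ c ∈ X.C, c ≠ 0 ∧ hammingNorm c ≤ h1 + h2 + δ + 1 := by
  obtain ⟨U, hU_card, hU_rank⟩ := X.exists_card_le_finrank_map_compl_lt hk
  obtain ⟨c, hc, hc₀, hcU⟩ :=
    exists_mem_ne_zero_forall_eq_zero_of_finrank_map_lt X.C (hU_rank.trans_eq X.hdim.symm)
  exact ⟨c, hc, hc₀,
    (hammingNorm_le_card_of_forall_notMem_eq_zero fun j hj => hcU j (mem_compl.2 hj)).trans hU_card⟩

end IsHDLMRC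

theorem hdlmrc_minimum_distance_general
    (F : Type*) [Field F] [DecidableEq F]
    (k r1 r2 h1 h2 δ t1 t2 n : ℕ)
    (hk : 0 < k)
    (X : IsHDLMRC F k r1 r2 h1 h2 δ t1 t2 n) :
    (∀ c ∈ X.C, c ≠ 0 → h1 + h2 + δ + 1 ≤ hammingNorm c) ∧
      ∃ c ∈ X.C, c ≠ 0 ∧ hammingNorm c = h1 + h2 + δ + 1 := by
  obtain ⟨c, hc, hc₀, hc_le⟩ := X.exists_hammingNorm_le hk
  exact ⟨fun _ => X.le_hammingNorm, c, hc, hc₀, hc_le.antisymm (X.le_hammingNorm hc hc₀)⟩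

/-- **Minimum distance of HDL-MRC.** A `[k, r₁, r₂, h₁, h₂, δ]` hierarchical data-local
maximally recoverable code has minimum distance exactly `d = h₁ + h₂ + δ + 1`. -/
theorem hdlmrc_minimum_distance
    (F : Type*) [Field F] [DecidableEq F]
    (k r1 r2 h1 h2 δ t1 t2 n : ℕ)
    (hk : 0 < k) (hr2 : 0 < r2) (hδ : 0 < δ) (ht1 : 0 < t1) (ht2 : 0 < t2)
    (X : IsHDLMRC F k r1 r2 h1 h2 δ t1 t2 n) :
    (∀ c ∈ X.C, c ≠ 0 → h1 + h2 + δ + 1 ≤ hammingNorm c) ∧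
      ∃ c ∈ X.C, c ≠ 0 ∧ hammingNorm c = h1 + h2 + δ + 1 :=
  hdlmrc_minimum_distance_general F k r1 r2 h1 h2 δ t1 t2 n hk X
end
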